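/- arXiv:1206.6027 — 4 statements merged into one kernel-verified Lean document; each statement's English description precedes it below -/
import Mathlib

section
/- Let I be any two-sided ideal of F, set I' = θ^{-1}(η(I)) ⊆ P (an ℕ-ideal of P containing E = ker θ), and let J = ⟨ῑ(f^*) : f ∈ I, f ≠ 0⟩_ℕ + D ⊆ P̄ be the extended letterplace analogue of I. Then Sat(J) = (I')^*, the multihomogenization of I'. -/
noncomputable section

/-! ### Common definitions for the letterplace correspondence (La Scala)

`FA K Y` is the free associative algebra `K⟨Y⟩` (monoid algebra of the free monoid on `Y`);
`PL K Y` is the letterplace polynomial algebra `K[y(j) : y ∈ Y, j ∈ ℕ*]`.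
The algebra `F̄ = K⟨X ∪ {t}⟩` is modeled as `FA K (Option X)` with `t = none`,
and similarly `P̄ = PL K (Option X)`. -/

/-- The free associative algebra `K⟨Y⟩`. -/
abbrev FA (K : Type*) [CommSemiring K] (Y : Type*) := MonoidAlgebra K (FreeMonoid Y)

/-- The letterplace polynomial algebra `K[y(j)]`, with places in `ℕ* = ℕ+`. -/
abbrev PL (K : Type*) [CommSemiring K] (Y : Type*) := MvPolynomial (Y × ℕ+) K

variable (K : Type*) [Field K]

/-- The generator of `K⟨Y⟩` corresponding to a letter. -/
def gen {Y : Type*} (y : Y) : FA K Y := MonoidAlgebra.of K (FreeMonoid Y) (FreeMonoid.of y)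

/-- The extra letter `t` of `F̄ = K⟨X ∪ {t}⟩`. -/
def tv {X : Type*} : FA K (Option X) := gen K (none : Option X)

/-- `φ : F̄ → F̄`, the algebra endomorphism with `φ(x_i) = x_i`, `φ(t) = 1`. -/
def phi {X : Type*} : FA K (Option X) →ₐ[K] FA K (Option X) :=
  (MonoidAlgebra.lift K (FA K (Option X)) (FreeMonoid (Option X)))
    (FreeMonoid.lift fun o => Option.elim o 1 (fun x => gen K (some x)))

/-- `f` is homogeneous of degree `d` (all words in its support have length `d`). -/
def IsHomog {Y : Type*} (d : ℕ) (f : FA K Y) : Prop :=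
  ∀ w ∈ f.coeff.support, FreeMonoid.length w = d

/-- The homogeneous component of degree `d` of `f ∈ K⟨Y⟩`. -/
def homComp {Y : Type*} (d : ℕ) (f : FA K Y) : FA K Y :=
  ∑ w ∈ f.coeff.support.filter (fun w => FreeMonoid.length w = d), MonoidAlgebra.single w (f.coeff w)

/-- A two-sided ideal is graded (for the grading by total degree) iff it contains all
homogeneous components of its elements. -/
def IsGradedF {Y : Type*} (I : TwoSidedIdeal (FA K Y)) : Prop := ∀ f ∈ I, ∀ d, homComp K d f ∈ I

/-- `C ⊆ F̄`: the two-sided ideal generated by all homogeneous elements of `ker φ`,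
i.e. the largest graded ideal contained in `ker φ`. -/
def Cideal {X : Type*} : TwoSidedIdeal (FA K (Option X)) :=
  TwoSidedIdeal.span {f | (∃ d, IsHomog K d f) ∧ phi K f = 0}

/-- The embedding of free monoids `X* → (X ∪ {t})*`. -/
def embWord {X : Type*} : FreeMonoid X →* FreeMonoid (Option X) := FreeMonoid.map some

/-- The canonical embedding `F = K⟨X⟩ → F̄ = K⟨X ∪ {t}⟩`. -/
def emb {X : Type*} : FA K X →ₐ[K] FA K (Option X) :=
  (MonoidAlgebra.lift K (FA K (Option X)) (FreeMonoid X))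
    ((MonoidAlgebra.of K (FreeMonoid (Option X))).comp embWord)

/-- The top degree `deg(f)` of `f` (max length of a word in the support). -/
def degF {Y : Type*} (f : FA K Y) : ℕ := f.coeff.support.sup FreeMonoid.length

/-- The homogenization `f^* = Σ_k f_k t^{deg f − k} ∈ F̄` of `f ∈ F`. -/
def hstar {X : Type*} (f : FA K X) : FA K (Option X) :=
  ∑ w ∈ f.coeff.support,
    MonoidAlgebra.single
      (embWord w * (FreeMonoid.of (none : Option X)) ^ (degF K f - FreeMonoid.length w)) (f.coeff w)

/-- Homogenization of an element already written in `F̄` (used for elements of `φ(F̄) = F`). -/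
def hstarO {X : Type*} (f : FA K (Option X)) : FA K (Option X) :=
  ∑ w ∈ f.coeff.support,
    MonoidAlgebra.single
      (w * (FreeMonoid.of (none : Option X)) ^ (degF K f - FreeMonoid.length w)) (f.coeff w)

/-- The homogenization `I^*` of an ideal `I ⊆ F`: the two-sided ideal of `F̄` generated by all
homogeneous elements of `φ⁻¹(I)` (identifying `F` with its image in `F̄`). -/
def hstarIdeal {X : Type*} (I : TwoSidedIdeal (FA K X)) : TwoSidedIdeal (FA K (Option X)) :=
  TwoSidedIdeal.span {g | (∃ d, IsHomog K d g) ∧ ∃ f ∈ I, phi K g = emb K f}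

/-- The saturation `Sat(J) = φ(J)^*` of a graded ideal `C ⊆ J ⊆ F̄`: the two-sided ideal
generated by all homogeneous elements `g` with `φ(g) ∈ φ(J)`. -/
def SatF {X : Type*} (J : TwoSidedIdeal (FA K (Option X))) : TwoSidedIdeal (FA K (Option X)) :=
  TwoSidedIdeal.span {g | (∃ d, IsHomog K d g) ∧ ∃ h ∈ J, phi K g = phi K h}

/-! ### The commutative (letterplace) side -/

/-- The shift of letterplace variables: `k · y(j) = y(j + k)`. -/
def shiftVar {Y : Type*} (k : ℕ) (p : Y × ℕ+) : Y × ℕ+ :=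
  (p.1, ⟨p.2 + k, Nat.add_pos_left p.2.2 k⟩)

/-- The action of `k ∈ ℕ` on the letterplace algebra. -/
def shift {Y : Type*} (k : ℕ) : PL K Y →ₐ[K] PL K Y := MvPolynomial.rename (shiftVar k)

/-- An ideal of `PL K Y` is an ℕ-ideal if it is stable under all shifts. -/
def IsNIdeal {Y : Type*} (I : Ideal (PL K Y)) : Prop := ∀ k, ∀ f ∈ I, shift K k f ∈ I

/-- The ℕ-ideal `⟨S⟩_ℕ` generated by a set `S`. -/
def nspan {Y : Type*} (S : Set (PL K Y)) : Ideal (PL K Y) :=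
  Ideal.span {g | ∃ k, ∃ f ∈ S, g = shift K k f}

/-- The place multidegree `∂(m)` of a monomial. -/
def placeDeg {Y : Type*} (m : (Y × ℕ+) →₀ ℕ) : ℕ+ →₀ ℕ := Finsupp.mapDomain Prod.snd m

/-- `f` is multihomogeneous of place multidegree `μ`. -/
def IsMultiHomog {Y : Type*} (μ : ℕ+ →₀ ℕ) (f : PL K Y) : Prop :=
  ∀ m ∈ f.support, placeDeg m = μ

/-- The multihomogeneous component of multidegree `μ` of `f`. -/
def mComp {Y : Type*} (μ : ℕ+ →₀ ℕ) (f : PL K Y) : PL K Y :=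
  ∑ m ∈ f.support.filter (fun m => placeDeg m = μ),
    MvPolynomial.monomial m (MvPolynomial.coeff m f)

/-- An ideal is multigraded iff it contains all multihomogeneous components of its elements. -/
def IsMultiGraded {Y : Type*} (I : Ideal (PL K Y)) : Prop := ∀ f ∈ I, ∀ μ, mComp K μ f ∈ I

/-- `ψ : P̄ → P̄`, with `ψ(x_i(j)) = x_i(j)` and `ψ(t(j)) = 1`. -/
def psi {X : Type*} : PL K (Option X) →ₐ[K] PL K (Option X) :=
  MvPolynomial.aeval (fun p => Option.elim p.1 1 (fun x => MvPolynomial.X (some x, p.2)))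

/-- The canonical embedding `P → P̄`. -/
def embP {X : Type*} : PL K X →ₐ[K] PL K (Option X) :=
  MvPolynomial.rename (fun p => (some p.1, p.2))

/-- The top multidegree `∂(f)` of `f` (componentwise max over the support). -/
def topDeg {Y : Type*} (f : PL K Y) : ℕ+ →₀ ℕ := f.support.sup placeDeg

/-- The pure-`t` monomial `∏_k t(k)^{ν_k}` with exponents `ν`. -/
def tExp {X : Type*} (ν : ℕ+ →₀ ℕ) : ((Option X) × ℕ+) →₀ ℕ :=
  Finsupp.mapDomain (fun k => ((none : Option X), k)) ν

/-- The multihomogenization `f^* = Σ_μ f_μ ∏_k t(k)^{ν_k − μ_k} ∈ P̄` of `f ∈ P`. -/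
def mhstar {X : Type*} (f : PL K X) : PL K (Option X) :=
  ∑ m ∈ f.support,
    MvPolynomial.monomial
      (Finsupp.mapDomain (fun p => ((some p.1 : Option X), p.2)) m +
        tExp (topDeg K f - placeDeg m))
      (MvPolynomial.coeff m f)

/-- Multihomogenization of an element already written in `P̄` (used for elements of `ψ(P̄) = P`). -/
def mhstarO {X : Type*} (f : PL K (Option X)) : PL K (Option X) :=
  ∑ m ∈ f.support,
    MvPolynomial.monomial (m + tExp (topDeg K f - placeDeg m)) (MvPolynomial.coeff m f)

/-- The multihomogenization `I^*` of an ℕ-ideal `I ⊆ P`: the ℕ-ideal of `P̄` generated by all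
multihomogeneous elements of `ψ⁻¹(I)` (identifying `P` with its image in `P̄`). -/
def mhstarIdeal {X : Type*} (I : Ideal (PL K X)) : Ideal (PL K (Option X)) :=
  nspan K {g | (∃ μ, IsMultiHomog K μ g) ∧ ∃ f ∈ I, psi K g = embP K f}

/-- The saturation `Sat(J) = ψ(J)^*` of a multigraded ℕ-ideal `J ⊆ P̄`. -/
def SatP {X : Type*} (J : Ideal (PL K (Option X))) : Ideal (PL K (Option X)) :=
  nspan K {g | (∃ μ, IsMultiHomog K μ g) ∧ ∃ h ∈ J, psi K g = psi K h}

/-! ### The letterplace embedding -/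

/-- Exponent vector of the letterplace monomial `y_1(n+1) y_2(n+2) ⋯` of a word. -/
def wordExpAux {Y : Type*} : ℕ → List Y → ((Y × ℕ+) →₀ ℕ)
  | _, [] => 0
  | n, y :: w => Finsupp.single (y, ⟨n + 1, n.succ_pos⟩) 1 + wordExpAux (n + 1) w

/-- The letterplace monomial `y_1(1) y_2(2) ⋯ y_d(d)` of a word `y_1 y_2 ⋯ y_d`. -/
def wordExp {Y : Type*} (w : FreeMonoid Y) : (Y × ℕ+) →₀ ℕ := wordExpAux 0 (FreeMonoid.toList w)

/-- The letterplace embedding `ι : K⟨Y⟩ → PL K Y` (a `K`-linear map). -/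
def iota {Y : Type*} (f : FA K Y) : PL K Y :=
  Finsupp.sum f.coeff fun w c => MvPolynomial.monomial (wordExp w) c

/-- The set `L` of multilinear elements of `PL K Y`: multihomogeneous elements of `V = Im ι`. -/
def Lset {Y : Type*} : Set (PL K Y) :=
  {f | f ∈ Set.range (iota K (Y := Y)) ∧ ∃ μ, IsMultiHomog K μ f}

/-- A letterplace ideal (`L`-ideal): an ℕ-ideal ℕ-generated by its multilinear elements. -/
def IsLPIdeal {Y : Type*} (J : Ideal (PL K Y)) : Prop :=
  IsNIdeal K J ∧ J = nspan K ((J : Set (PL K Y)) ∩ Lset K)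

/-- The generators `x_i(1)t(2) − t(1)x_i(2)` of `D`. -/
def Dgens (X : Type*) : Set (PL K (Option X)) :=
  {g | ∃ x : X,
    g = MvPolynomial.X ((some x : Option X), (1 : ℕ+)) *
          MvPolynomial.X ((none : Option X), (2 : ℕ+)) -
        MvPolynomial.X ((none : Option X), (1 : ℕ+)) *
          MvPolynomial.X ((some x : Option X), (2 : ℕ+))}

/-- The generators `ῑ([t, x_i]) = t(1)x_i(2) − x_i(1)t(2)` of `D`. -/
def DgensT (X : Type*) : Set (PL K (Option X)) :=
  {g | ∃ x : X,
    g = MvPolynomial.X ((none : Option X), (1 : ℕ+)) *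
          MvPolynomial.X ((some x : Option X), (2 : ℕ+)) -
        MvPolynomial.X ((some x : Option X), (1 : ℕ+)) *
          MvPolynomial.X ((none : Option X), (2 : ℕ+))}

/-- `D ⊆ P̄`: the letterplace analogue of `C`. -/
def Did (X : Type*) : Ideal (PL K (Option X)) := nspan K (Dgens K X)

/-- The product `∏_{d < k ≤ d'} t(k)`. -/
def tProd (X : Type*) (d d' : ℕ) : PL K (Option X) :=
  ∏ k ∈ Finset.range (d' - d), MvPolynomial.X ((none : Option X), ⟨d + k + 1, Nat.succ_pos _⟩)

/-- The `L`-saturation `Sat_L(J)` of a letterplace ideal `D ⊆ J ⊆ P̄`. -/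
def SatL {X : Type*} (J : Ideal (PL K (Option X))) : Ideal (PL K (Option X)) :=
  nspan K {f | f ∈ Lset K ∧ ∃ d', MvPolynomial.totalDegree f ≤ d' ∧
    tProd K X (MvPolynomial.totalDegree f) d' * f ∈ J}

/-- `J` is `L`-saturated: `t(d+1)·f ∈ J` with `f` multilinear of degree `d` implies `f ∈ J`. -/
def IsLSat {X : Type*} (J : Ideal (PL K (Option X))) : Prop :=
  ∀ f ∈ Lset K (Y := Option X),
    MvPolynomial.X ((none : Option X), ⟨MvPolynomial.totalDegree f + 1, Nat.succ_pos _⟩) * f ∈ J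
      → f ∈ J

/-! ### Monomial orderings -/

/-- The shift action on letterplace monomials. -/
def shiftMon {Y : Type*} (k : ℕ) (m : (Y × ℕ+) →₀ ℕ) : (Y × ℕ+) →₀ ℕ :=
  Finsupp.mapDomain (shiftVar k) m

/-- A monomial ordering of a (possibly infinite) commutative polynomial ring, given as a strict
order relation on exponent vectors: a well-founded strict total order with `1` minimal,
compatible with multiplication of monomials. -/
structure IsMonOrd {σ : Type*} (r : (σ →₀ ℕ) → (σ →₀ ℕ) → Prop) : Prop where
  total : ∀ m n, r m n ∨ m = n ∨ r n m
  irrefl : ∀ m, ¬ r m m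
  trans : ∀ a b c, r a b → r b c → r a c
  wf : WellFounded r
  zero_min : ∀ m, ¬ r m 0
  add_compat : ∀ m n u, r m n → r (u + m) (u + n)

/-- The ordering is compatible with the ℕ-action (an `ℕ`-ordering). -/
def IsNCompat {Y : Type*} (r : ((Y × ℕ+) →₀ ℕ) → ((Y × ℕ+) →₀ ℕ) → Prop) : Prop :=
  ∀ (k : ℕ) m n, r m n → r (shiftMon k m) (shiftMon k n)

/-- The weight of a letterplace monomial: the largest place index occurring in it
(`⊥ = -∞` for the monomial `1`). -/
def wt {Y : Type*} (m : (Y × ℕ+) →₀ ℕ) : WithBot ℕ :=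
  m.support.sup (fun p => ((p.2 : ℕ) : WithBot ℕ))

/-- A weighted ordering: smaller weight implies smaller monomial. -/
def IsWeighted {Y : Type*} (r : ((Y × ℕ+) →₀ ℕ) → ((Y × ℕ+) →₀ ℕ) → Prop) : Prop :=
  ∀ m n, wt m < wt n → r m n

/-- A monomial ordering of the free algebra `K⟨Y⟩`: a well-founded strict total order on words
compatible with two-sided multiplication. -/
structure IsWordOrd {Y : Type*} (r : FreeMonoid Y → FreeMonoid Y → Prop) : Prop where
  total : ∀ m n, r m n ∨ m = n ∨ r n m
  irrefl : ∀ m, ¬ r m m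
  trans : ∀ a b c, r a b → r b c → r a c
  wf : WellFounded r
  mul_compat : ∀ m n u v, r m n → r (u * m * v) (u * n * v)

/-- A word ordering is graded if shorter words are smaller. -/
def IsGradedWordOrd {Y : Type*} (r : FreeMonoid Y → FreeMonoid Y → Prop) : Prop :=
  ∀ m n, FreeMonoid.length m < FreeMonoid.length n → r m n

/-- The word ordering of `K⟨Y⟩` induced by a monomial ordering of `PL K Y` via `ι`. -/
def inducedWordOrd {Y : Type*} (r : ((Y × ℕ+) →₀ ℕ) → ((Y × ℕ+) →₀ ℕ) → Prop)
    (m n : FreeMonoid Y) : Prop := r (wordExp m) (wordExp n)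

/-- The factor of a letterplace monomial at place `j` (a monomial of `P(j) ≅ P(1)`). -/
def fiber {Y : Type*} (m : (Y × ℕ+) →₀ ℕ) (j : ℕ+) : Y →₀ ℕ :=
  Finsupp.comapDomain (fun y => (y, j)) m (fun _ _ _ _ h => congrArg Prod.fst h)

/-- The place `ℕ`-ordering of `PL K Y` induced by a monomial ordering `r1` of `P(1)`:
compare the factors at the highest place where the two monomials differ. -/
def placeExt {Y : Type*} (r1 : (Y →₀ ℕ) → (Y →₀ ℕ) → Prop)
    (m n : (Y × ℕ+) →₀ ℕ) : Prop :=
  ∃ j : ℕ+, r1 (fiber m j) (fiber n j) ∧ ∀ j', j < j' → fiber m j' = fiber n j'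

/-! ### Leading monomials and Gröbner bases -/

/-- `m` is the leading monomial of `f ∈ PL K Y` with respect to the ordering `r`. -/
def IsLM {Y : Type*} (r : ((Y × ℕ+) →₀ ℕ) → ((Y × ℕ+) →₀ ℕ) → Prop)
    (f : PL K Y) (m : (Y × ℕ+) →₀ ℕ) : Prop :=
  m ∈ f.support ∧ ∀ m' ∈ f.support, m' ≠ m → r m' m

/-- `LM(S)`: the ideal generated by the leading monomials of the nonzero elements of `S`. -/
def LMideal {Y : Type*} (r : ((Y × ℕ+) →₀ ℕ) → ((Y × ℕ+) →₀ ℕ) → Prop)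
    (S : Set (PL K Y)) : Ideal (PL K Y) :=
  Ideal.span {p | ∃ f ∈ S, f ≠ 0 ∧ ∃ m, IsLM K r f m ∧ p = MvPolynomial.monomial m (1 : K)}

/-- The ideal generated by `ℕ·lm(G)`. -/
def shLMideal {Y : Type*} (r : ((Y × ℕ+) →₀ ℕ) → ((Y × ℕ+) →₀ ℕ) → Prop)
    (G : Set (PL K Y)) : Ideal (PL K Y) :=
  Ideal.span {p | ∃ g ∈ G, g ≠ 0 ∧ ∃ m, IsLM K r g m ∧
    ∃ k : ℕ, p = MvPolynomial.monomial (shiftMon k m) (1 : K)}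

/-- `G ⊆ I` is a Gröbner `ℕ`-basis of the ℕ-ideal `I`: `ℕ·lm(G)` generates `LM(I)`. -/
def IsGroebnerNB {Y : Type*} (r : ((Y × ℕ+) →₀ ℕ) → ((Y × ℕ+) →₀ ℕ) → Prop)
    (I : Ideal (PL K Y)) (G : Set (PL K Y)) : Prop :=
  G ⊆ (I : Set (PL K Y)) ∧ shLMideal K r G = LMideal K r (I : Set (PL K Y))

/-- `G` is a Gröbner `L`-basis of the letterplace ideal `J`: `G ⊆ J ∩ L` and the leading monomial
of every nonzero multilinear element of `J` is divisible by a shift of some `lm(g)`, `g ∈ G`. -/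
def IsGroebnerLB {Y : Type*} (r : ((Y × ℕ+) →₀ ℕ) → ((Y × ℕ+) →₀ ℕ) → Prop)
    (J : Ideal (PL K Y)) (G : Set (PL K Y)) : Prop :=
  G ⊆ (J : Set (PL K Y)) ∩ Lset K ∧
  ∀ f ∈ (J : Set (PL K Y)) ∩ Lset K, f ≠ 0 →
    ∃ g ∈ G, ∃ (k : ℕ) (mg mf : (Y × ℕ+) →₀ ℕ),
      IsLM K r g mg ∧ IsLM K r f mf ∧ shiftMon k mg ≤ mf

/-- `w` is the leading monomial (word) of `f ∈ K⟨Y⟩` with respect to the word ordering `r'`. -/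
def IsLMF {Y : Type*} (r' : FreeMonoid Y → FreeMonoid Y → Prop)
    (f : FA K Y) (w : FreeMonoid Y) : Prop :=
  w ∈ f.coeff.support ∧ ∀ w' ∈ f.coeff.support, w' ≠ w → r' w' w

/-- `G ⊆ I` is a Gröbner basis of the two-sided ideal `I ⊆ K⟨Y⟩`: the leading word of every
nonzero `f ∈ I` has the form `u · lm(g) · v` for some nonzero `g ∈ G`. -/
def IsGroebnerBF {Y : Type*} (r' : FreeMonoid Y → FreeMonoid Y → Prop)
    (I : TwoSidedIdeal (FA K Y)) (G : Set (FA K Y)) : Prop :=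
  G ⊆ (I : Set (FA K Y)) ∧
  ∀ f ∈ I, f ≠ 0 → ∃ g ∈ G, g ≠ 0 ∧ ∃ (u v wf wg : FreeMonoid Y),
    IsLMF K r' f wf ∧ IsLMF K r' g wg ∧ wf = u * wg * v

/-! ### Normal forms -/

/-- The generators `x_i(1) x_j(1)` of `N`. -/
def Ngens (Y : Type*) : Set (PL K Y) :=
  {g | ∃ i j : Y, g = MvPolynomial.X (i, (1 : ℕ+)) * MvPolynomial.X (j, (1 : ℕ+))}

/-- A polynomial is in normal form modulo `N` iff in each of its monomials all place indices
are pairwise distinct. -/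
def NormalModN {Y : Type*} (f : PL K Y) : Prop :=
  ∀ m ∈ f.support, ∀ k : ℕ+, placeDeg m k ≤ 1

/-- A polynomial is in normal form modulo `D` iff none of its monomials is divisible by a shift
of the leading monomial of some generator `t(1)x_i(2) − x_i(1)t(2)` of `D`. -/
def NormalModD {X : Type*} (r : (((Option X) × ℕ+) →₀ ℕ) → (((Option X) × ℕ+) →₀ ℕ) → Prop)
    (f : PL K (Option X)) : Prop :=
  ∀ m ∈ f.support, ∀ g ∈ DgensT K X, ∀ mg, IsLM K r g mg → ∀ k : ℕ, ¬ shiftMon k mg ≤ m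

/-- `G` is a Gröbner `L`-basis of `J` modulo `D`: its elements are multilinear elements of `J`
in normal form modulo `D`, and together with the generators of `D` they form a
Gröbner `L`-basis of `J`. -/
def IsGroebnerLBmodD {X : Type*}
    (r : (((Option X) × ℕ+) →₀ ℕ) → (((Option X) × ℕ+) →₀ ℕ) → Prop)
    (J : Ideal (PL K (Option X))) (G : Set (PL K (Option X))) : Prop :=
  (∀ g ∈ G, g ∈ (J : Set (PL K (Option X))) ∩ Lset K ∧ NormalModD K r g) ∧
  IsGroebnerLB K r J (G ∪ DgensT K X)

/-- The commutators `[t, x_i] = t x_i − x_i t` in `F̄`. -/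
def commGens (X : Type*) : Set (FA K (Option X)) :=
  {h | ∃ x : X, h = tv K * gen K (some x) - gen K (some x) * tv K}

/-- A polynomial of `F̄` is in normal form modulo `C` iff none of its words contains the leading
word of some commutator `[t, x_i]` as a factor. -/
def NormalModC {X : Type*} (r' : FreeMonoid (Option X) → FreeMonoid (Option X) → Prop)
    (f : FA K (Option X)) : Prop :=
  ∀ w ∈ f.coeff.support, ∀ g ∈ commGens K X, ∀ wg, IsLMF K r' g wg →
    ¬ ∃ u v, w = u * wg * v

/-! ### Concrete orderings on words -/

/-- The order on the letters of `X ∪ {t}` (with `X = ℕ`): `t ≺ x_1 ≺ x_2 ≺ ⋯`. -/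
def optLt : Option ℕ → Option ℕ → Prop
  | none, some _ => True
  | some i, some j => i < j
  | _, none => False

/-- The graded right lexicographic ordering on words: first compare lengths, then compare
letter by letter from the right. -/
def grRightLex {Y : Type*} (lt : Y → Y → Prop) (dflt : Y) (m n : FreeMonoid Y) : Prop :=
  FreeMonoid.length m < FreeMonoid.length n ∨
  (FreeMonoid.length m = FreeMonoid.length n ∧
    ∃ t < FreeMonoid.length m,
      lt ((FreeMonoid.toList m).getD t dflt) ((FreeMonoid.toList n).getD t dflt) ∧
      ∀ s, t < s → (FreeMonoid.toList m).getD s dflt = (FreeMonoid.toList n).getD s dflt)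

end

/-- `η : F → Q = K[x_i(1)]`, the algebra epimorphism `x_i ↦ x_i(1)`. -/
noncomputable def eta (K : Type*) [Field K] (X : Type*) : FA K X →ₐ[K] MvPolynomial X K :=
  (MonoidAlgebra.lift K (MvPolynomial X K) (FreeMonoid X))
    (FreeMonoid.lift fun x => MvPolynomial.X x)

/-- `θ : P → Q`, the ℕ-equivariant algebra epimorphism `x_i(j) ↦ x_i(1)`. -/
noncomputable def theta (K : Type*) [Field K] (X : Type*) : PL K X →ₐ[K] MvPolynomial X K :=
  MvPolynomial.aeval (fun p => MvPolynomial.X p.1)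

/-!
Write `π = dehom : P̄ → P` for `ψ` viewed as a map onto `P`, so that `ψ = π` followed by the inclusion
`P ⊆ P̄`. Since `π` is surjective, `ψ(g) ∈ ψ(J)` iff `π(g) ∈ π(J)`, so `Sat(J) = π(J)^*` for every
ideal `J`, and it remains to show `π(J) = I'`. The ideal `π(J)` is generated by the shifts of
`π(ῑ(f^*)) = ι(f)` and of `π(x_i(1)t(2) − t(1)x_i(2)) = x_i(1) − x_i(2)`, so it contains `E`,
and `θ(π(J)) = θ(ι(I)) = η(I)`. An ideal containing `E = ker θ` is the full preimage of its image
under `θ`, whence `π(J) = θ⁻¹(η(I)) = I'`.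
-/

noncomputable section Letterplace

variable {K : Type*} [Field K] {X Y : Type*}

variable (K X) in
def dehom : PL K (Option X) →ₐ[K] PL K X :=
  MvPolynomial.aeval fun p => Option.elim p.1 1 fun x => MvPolynomial.X (x, p.2)

variable (K X) in
def placeOne : MvPolynomial X K →ₐ[K] PL K X :=
  MvPolynomial.aeval fun x => MvPolynomial.X (x, 1)

theorem psi_eq_embP_comp_dehom : psi K = (embP K).comp (dehom K X) :=
  MvPolynomial.algHom_ext fun ⟨o, _⟩ => by cases o <;> simp [psi, dehom, embP]

theorem dehom_comp_embP : (dehom K X).comp (embP K) = AlgHom.id K (PL K X) :=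
  MvPolynomial.algHom_ext fun _ => by simp [dehom, embP]

theorem dehom_surjective : Function.Surjective (dehom K X) :=
  fun f => ⟨embP K f, AlgHom.congr_fun dehom_comp_embP f⟩

theorem dehom_comp_shift (k : ℕ) : (dehom K X).comp (shift K k) = (shift K k).comp (dehom K X) :=
  MvPolynomial.algHom_ext fun ⟨o, _⟩ => by cases o <;> simp [dehom, shift, shiftVar]

theorem dehom_shift (k : ℕ) (f : PL K (Option X)) :
    dehom K X (shift K k f) = shift K k (dehom K X f) :=
  AlgHom.congr_fun (dehom_comp_shift k) f

theorem theta_comp_shift (k : ℕ) : (theta K X).comp (shift K k) = theta K X :=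
  MvPolynomial.algHom_ext fun _ => by simp [theta, shift, shiftVar]

theorem theta_shift (k : ℕ) (f : PL K X) : theta K X (shift K k f) = theta K X f :=
  AlgHom.congr_fun (theta_comp_shift k) f

theorem shift_zero (f : PL K Y) : shift K 0 f = f := by
  have : shiftVar (Y := Y) 0 = id := funext fun _ => rfl
  simp [shift, this]

theorem nspan_le {S : Set (PL K Y)} {N : Ideal (PL K Y)} (h : ∀ k, ∀ f ∈ S, shift K k f ∈ N) :
    nspan K S ≤ N :=
  Ideal.span_le.mpr fun _ ⟨k, f, hf, hg⟩ => hg ▸ h k f hf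

theorem subset_nspan {S : Set (PL K Y)} : S ⊆ nspan K S :=
  fun f hf => Ideal.subset_span ⟨0, f, hf, (shift_zero f).symm⟩

theorem SatP_eq_mhstarIdeal_map_dehom (J : Ideal (PL K (Option X))) :
    SatP K J = mhstarIdeal K (J.map (dehom K X)) := by
  have hpsi (g : PL K (Option X)) : psi K g = embP K (dehom K X g) := by
    rw [psi_eq_embP_comp_dehom]; rfl
  unfold SatP mhstarIdeal
  congr 1
  ext g
  simp only [Set.mem_ofPred_eq, Ideal.mem_map_iff_of_surjective _ dehom_surjective]
  constructor
  · rintro ⟨hg, h, hJ, he⟩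
    exact ⟨hg, _, ⟨h, hJ, rfl⟩, he.trans (hpsi h)⟩
  · rintro ⟨hg, _, ⟨h, hJ, rfl⟩, he⟩
    exact ⟨hg, h, hJ, he.trans (hpsi h).symm⟩

end Letterplace

noncomputable section KernelTheta

variable {K : Type*} [Field K] {X : Type*}

variable (K X) in
def Eid : Ideal (PL K X) :=
  nspan K {g | ∃ x : X, g = MvPolynomial.X (x, 1) - MvPolynomial.X (x, 2)}

theorem X_sub_X_one_mem {N : Ideal (PL K X)} (hN : Eid K X ≤ N)
    (x : X) (j : ℕ+) : (MvPolynomial.X (x, j) - MvPolynomial.X (x, 1) : PL K X) ∈ N := by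
  obtain ⟨n, rfl⟩ : ∃ n : ℕ, n.succPNat = j := ⟨j.natPred, j.succPNat_natPred⟩
  induction n with
  | zero => exact (sub_self (MvPolynomial.X (x, (1 : ℕ+)) : PL K X)).symm ▸ N.zero_mem
  | succ n ih =>
    have hshift : shift K n (MvPolynomial.X (x, 1) - MvPolynomial.X (x, 2) : PL K X) =
        MvPolynomial.X (x, n.succPNat) - MvPolynomial.X (x, (n + 1).succPNat) := by
      simp only [map_sub, shift, MvPolynomial.rename_X, shiftVar]
      congr 3 <;> apply PNat.eq <;> simp [Nat.succPNat] <;> omega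
    simpa [hshift] using sub_mem ih (hN (Ideal.subset_span ⟨n, _, ⟨x, rfl⟩, rfl⟩))

/-- Modulo an ideal containing `E`, the identity and `placeOne ∘ θ` agree on the variables. -/
theorem sub_placeOne_theta_mem {N : Ideal (PL K X)} (hN : Eid K X ≤ N)
    (p : PL K X) : p - placeOne K X (theta K X p) ∈ N := by
  rw [← Ideal.Quotient.eq]
  suffices (Ideal.Quotient.mkₐ K N).comp ((placeOne K X).comp (theta K X)) =
      Ideal.Quotient.mkₐ K N from (AlgHom.congr_fun this p).symm
  refine MvPolynomial.algHom_ext fun ⟨x, j⟩ => ?_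
  simpa [placeOne, theta] using (Ideal.Quotient.eq.mpr (X_sub_X_one_mem hN x j)).symm

theorem mem_of_theta_eq {N : Ideal (PL K X)} (hN : Eid K X ≤ N)
    {p q : PL K X} (hq : q ∈ N) (h : theta K X p = theta K X q) : p ∈ N := by
  have := add_mem (sub_mem (sub_placeOne_theta_mem hN p) (sub_placeOne_theta_mem hN q)) hq
  rwa [h, sub_sub_sub_cancel_right, sub_add_cancel] at this

end KernelTheta

section Iota

variable {K : Type*} [Field K] {X Y : Type*}

theorem iota_single (w : FreeMonoid Y) (c : K) :
    iota K (MonoidAlgebra.single w c) = MvPolynomial.monomial (wordExp w) c :=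
  Finsupp.sum_single_index (map_zero _)

theorem iota_add (f g : FA K Y) : iota K (f + g) = iota K f + iota K g :=
  Finsupp.sum_add_index' (fun _ => map_zero _) fun w => map_add (MvPolynomial.monomial (wordExp w))

theorem iota_sum {ι : Type*} (s : Finset ι) (f : ι → FA K Y) :
    iota K (∑ i ∈ s, f i) = ∑ i ∈ s, iota K (f i) :=
  map_sum (AddMonoidHom.mk' (iota K) iota_add) f s

theorem monomial_wordExpAux_cons (n : ℕ) (y : Y) (l : List Y) (c : K) :
    MvPolynomial.monomial (wordExpAux n (y :: l)) c =
      MvPolynomial.X (y, ⟨n + 1, n.succ_pos⟩) * MvPolynomial.monomial (wordExpAux (n + 1) l) c := by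
  rw [wordExpAux, MvPolynomial.monomial_single_add, pow_one]

theorem theta_monomial_wordExpAux (n : ℕ) (l : List X) (c : K) :
    theta K X (MvPolynomial.monomial (wordExpAux n l) c) =
      MvPolynomial.C c * (l.map MvPolynomial.X).prod := by
  induction l generalizing n with
  | nil => simp [wordExpAux]
  | cons y l ih =>
    rw [monomial_wordExpAux_cons, map_mul, ih]
    simp [theta, mul_left_comm]

theorem theta_iota (f : FA K X) : theta K X (iota K f) = eta K X f := by
  induction f using MonoidAlgebra.induction_linear with
  | zero => simp [iota]
  | add f g hf hg => rw [iota_add, map_add, map_add, hf, hg]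
  | single w c =>
    rw [iota_single, wordExp, theta_monomial_wordExpAux, eta, MonoidAlgebra.lift_single,
      FreeMonoid.lift_apply, MvPolynomial.smul_eq_C_mul]

theorem dehom_monomial_wordExpAux_replicate_none (n k : ℕ) (c : K) :
    dehom K X (MvPolynomial.monomial (wordExpAux n (List.replicate k none)) c) =
      MvPolynomial.C c := by
  induction k generalizing n with
  | zero => simp [wordExpAux]
  | succ k ih =>
    rw [List.replicate_succ, monomial_wordExpAux_cons, map_mul, ih]
    simp [dehom]

theorem dehom_monomial_wordExpAux_map_some_append (n : ℕ) (l : List X) (k : ℕ) (c : K) :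
    dehom K X (MvPolynomial.monomial (wordExpAux n (l.map some ++ List.replicate k none)) c) =
      MvPolynomial.monomial (wordExpAux n l) c := by
  induction l generalizing n with
  | nil => simpa [wordExpAux] using dehom_monomial_wordExpAux_replicate_none n k c
  | cons y l ih =>
    rw [List.map_cons, List.cons_append, monomial_wordExpAux_cons, map_mul, ih,
      monomial_wordExpAux_cons]
    simp [dehom]

theorem toList_embWord_mul_pow_none (w : FreeMonoid X) (k : ℕ) :
    FreeMonoid.toList (embWord w * FreeMonoid.of none ^ k) =
      (FreeMonoid.toList w).map some ++ List.replicate k none := by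
  induction k with
  | zero => simp [embWord]
  | succ k ih =>
    rw [pow_succ, ← mul_assoc, FreeMonoid.toList_mul, ih, FreeMonoid.toList_of,
      List.replicate_succ', List.append_assoc]

theorem dehom_iota_hstar (f : FA K X) : dehom K X (iota K (hstar K f)) = iota K f := by
  simp only [hstar, iota_sum, iota_single, map_sum, wordExp, toList_embWord_mul_pow_none,
    dehom_monomial_wordExpAux_map_some_append]
  rfl

end Iota

noncomputable section ExtendedLetterplace

variable {K : Type*} [Field K] {X : Type*}

variable (K) in
def extLetterplaceIdeal (I : TwoSidedIdeal (FA K X)) : Ideal (PL K (Option X)) :=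
  nspan K {g | ∃ f ∈ I, f ≠ 0 ∧ g = iota K (hstar K f)} ⊔ Did K X

theorem dehom_Dgen (x : X) :
    dehom K X (MvPolynomial.X (some x, 1) * MvPolynomial.X (none, 2) -
        MvPolynomial.X (none, 1) * MvPolynomial.X (some x, 2)) =
      MvPolynomial.X (x, 1) - MvPolynomial.X (x, 2) := by
  simp [dehom]

theorem map_dehom_extLetterplaceIdeal (I : TwoSidedIdeal (FA K X)) {I' : Ideal (PL K X)}
    (hI' : (I' : Set (PL K X)) = theta K X ⁻¹' (eta K X '' (I : Set (FA K X)))) :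
    (extLetterplaceIdeal K I).map (dehom K X) = I' := by
  have hmem (p : PL K X) : p ∈ I' ↔ theta K X p ∈ eta K X '' (I : Set (FA K X)) := by
    rw [← SetLike.mem_coe, hI', Set.mem_preimage]
  have hE : Eid K X ≤ (extLetterplaceIdeal K I).map (dehom K X) := nspan_le fun k _ ⟨x, hx⟩ => by
    rw [hx, ← dehom_Dgen, ← dehom_shift]
    exact Ideal.mem_map_of_mem _ (Ideal.mem_sup_right (Ideal.subset_span ⟨k, _, ⟨x, rfl⟩, rfl⟩))
  apply le_antisymm
  · rw [Ideal.map_le_iff_le_comap]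
    refine sup_le (nspan_le ?_) (nspan_le ?_)
    · rintro k _ ⟨f, hf, -, rfl⟩
      rw [Ideal.mem_comap, hmem, dehom_shift, theta_shift, dehom_iota_hstar, theta_iota]
      exact ⟨f, hf, rfl⟩
    · rintro k _ ⟨x, rfl⟩
      rw [Ideal.mem_comap, hmem, dehom_shift, theta_shift, dehom_Dgen]
      exact ⟨0, I.zero_mem, by simp [theta]⟩
  · intro p hp
    obtain ⟨f, hf, hθ⟩ := (hmem p).mp hp
    refine mem_of_theta_eq hE (q := iota K f) ?_ (hθ.symm.trans (theta_iota f).symm)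
    by_cases hf0 : f = 0
    · simp [hf0, iota]
    · rw [← dehom_iota_hstar]
      exact Ideal.mem_map_of_mem _ (Ideal.mem_sup_left (subset_nspan ⟨f, hf, hf0, rfl⟩))

end ExtendedLetterplace

theorem statement_10_general (K : Type*) [Field K] (X : Type*)
    (I : TwoSidedIdeal (FA K X)) (I' : Ideal (PL K X))
    (hI' : (I' : Set (PL K X)) = theta K X ⁻¹' (eta K X '' (I : Set (FA K X))))
    (J : Ideal (PL K (Option X)))
    (hJ : J = nspan K {g | ∃ f ∈ I, f ≠ 0 ∧ g = iota K (hstar K f)} ⊔ Did K X) :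
    SatP K J = mhstarIdeal K I' := by
  rw [SatP_eq_mhstarIdeal_map_dehom, hJ]
  exact congrArg (mhstarIdeal K) (map_dehom_extLetterplaceIdeal I hI')

/-- For a two-sided ideal `I ⊆ F`, `I' = θ⁻¹(η(I)) ⊆ P` and the extended
letterplace analogue `J = ⟨ῑ(f^*) : 0 ≠ f ∈ I⟩_ℕ + D ⊆ P̄`, one has `Sat(J) = (I')^*`. -/
theorem statement_10 (K : Type*) [Field K] (X : Type*) [Countable X]
    (I : TwoSidedIdeal (FA K X)) (I' : Ideal (PL K X))
    (hI' : (I' : Set (PL K X)) = theta K X ⁻¹' (eta K X '' (I : Set (FA K X))))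
    (J : Ideal (PL K (Option X)))
    (hJ : J = nspan K {g | ∃ f ∈ I, f ≠ 0 ∧ g = iota K (hstar K f)} ⊔ Did K X) :
    SatP K J = mhstarIdeal K I' :=
  statement_10_general K X I I' hI' J hJ
end

section
/- Let ≺ be a weighted monomial ℕ-ordering of P, and define a total order ≺' on the words Mon(F) by m ≺' n if and only if ι(m) ≺ ι(n). Then ≺' is a graded monomial ordering of F. -/
/-! The letterplace monomial `ι(w)` of a word `w` has weight exactly `|w|` and `ι` is injective,
so `≺'` is a well-founded strict total order, graded because `≺` is weighted. On exponent
vectors `ι(u m v) = ι(u) + |u|·ι(m) + (|u| + |m|)·ι(v)`, where `k·` is the shift; hence if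
`m ≺' n` with `|m| = |n|`, then `u m v ≺' u n v` by the ℕ- and multiplicative compatibility of
`≺`. If `|m| ≠ |n|`, gradedness forces `|m| < |n|` and gives the claim directly. -/

section Letterplace

variable {Y : Type*}

lemma shiftVar_succPNat (k n : ℕ) (y : Y) :
    shiftVar k (y, n.succPNat) = (y, (n + k).succPNat) :=
  Prod.ext rfl (PNat.eq (Nat.add_right_comm n 1 k))

lemma wordExpAux_nil (n : ℕ) : wordExpAux n ([] : List Y) = 0 :=
  rfl

lemma wordExpAux_cons (n : ℕ) (y : Y) (w : List Y) :
    wordExpAux n (y :: w) = Finsupp.single (y, n.succPNat) 1 + wordExpAux (n + 1) w :=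
  rfl

lemma wordExpAux_append (n : ℕ) (w₁ w₂ : List Y) :
    wordExpAux n (w₁ ++ w₂) = wordExpAux n w₁ + wordExpAux (n + w₁.length) w₂ := by
  induction w₁ generalizing n with
  | nil => simp [wordExpAux]
  | cons a t ih =>
    simp only [List.cons_append, wordExpAux_cons, ih, List.length_cons, add_assoc,
      Nat.add_comm 1]

lemma shiftMon_wordExpAux (k n : ℕ) (w : List Y) :
    shiftMon k (wordExpAux n w) = wordExpAux (n + k) w := by
  induction w generalizing n with
  | nil => simp [wordExpAux, shiftMon]
  | cons a t ih =>
    rw [wordExpAux_cons, wordExpAux_cons, shiftMon, Finsupp.mapDomain_add,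
      Finsupp.mapDomain_single, ← shiftMon, ih, shiftVar_succPNat, Nat.add_right_comm n 1 k]

lemma wordExp_mul (u v : FreeMonoid Y) :
    wordExp (u * v) = wordExp u + shiftMon u.length (wordExp v) := by
  rw [wordExp, wordExp, wordExp, FreeMonoid.toList_mul, wordExpAux_append, shiftMon_wordExpAux]
  rfl

lemma wordExpAux_apply_of_le {n : ℕ} {j : ℕ+} (hj : (j : ℕ) ≤ n) (w : List Y) (y : Y) :
    wordExpAux n w (y, j) = 0 := by
  induction w generalizing n with
  | nil => rfl
  | cons a t ih =>
    have hne : (a, n.succPNat) ≠ (y, j) := by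
      rintro ⟨⟩
      simp at hj
    rw [wordExpAux_cons, Finsupp.add_apply, Finsupp.single_eq_of_ne' hne, ih (by omega), add_zero]

lemma wordExpAux_cons_apply (n : ℕ) (a : Y) (w : List Y) (y : Y) :
    wordExpAux n (a :: w) (y, n.succPNat) = Finsupp.single a 1 y := by
  classical
  rw [wordExpAux_cons, Finsupp.add_apply, wordExpAux_apply_of_le (n := n + 1) le_rfl, add_zero]
  simp [Finsupp.single_apply]

lemma wordExpAux_injective (n : ℕ) : Function.Injective (wordExpAux (Y := Y) n) := by
  intro w₁ w₂ h
  induction w₁ generalizing n w₂ with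
  | nil =>
    cases w₂ with
    | nil => rfl
    | cons b t =>
      have := congr($h (b, n.succPNat))
      rw [wordExpAux_nil, wordExpAux_cons_apply] at this
      simp at this
  | cons a t ih =>
    cases w₂ with
    | nil =>
      have := congr($h (a, n.succPNat))
      rw [wordExpAux_nil, wordExpAux_cons_apply] at this
      simp at this
    | cons b t₂ =>
      have hab : a = b := by
        classical
        have := congr($h (a, n.succPNat))
        rw [wordExpAux_cons_apply, wordExpAux_cons_apply] at this
        simpa [Finsupp.single_apply, eq_comm] using this
      subst hab
      rw [wordExpAux_cons, wordExpAux_cons] at h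
      rw [ih (n + 1) (add_left_cancel h)]

lemma wordExp_injective : Function.Injective (wordExp (Y := Y)) :=
  (wordExpAux_injective 0).comp FreeMonoid.toList.injective

lemma wt_add (m n : (Y × ℕ+) →₀ ℕ) : wt (m + n) = wt m ⊔ wt n := by
  classical
  rw [wt, Finsupp.support_add_eq_union, Finset.sup_union]
  rfl

lemma wt_single (p : Y × ℕ+) {c : ℕ} (hc : c ≠ 0) :
    wt (Finsupp.single p c) = (p.2 : ℕ) := by
  simp [wt, Finsupp.support_single _ hc]

lemma wt_wordExpAux_cons (n : ℕ) (a : Y) (w : List Y) :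
    wt (wordExpAux n (a :: w)) = ((n + (a :: w).length : ℕ) : WithBot ℕ) := by
  induction w generalizing n a with
  | nil => rw [wordExpAux_cons, wordExpAux_nil, add_zero, wt_single _ one_ne_zero]; rfl
  | cons b t ih =>
    rw [wordExpAux_cons, wt_add, ih, wt_single _ one_ne_zero, Nat.succPNat_coe,
      ← Nat.mono_cast.map_max]
    simp only [List.length_cons]
    congr 1
    omega

lemma wt_wordExp_of_ne_one {w : FreeMonoid Y} (hw : w ≠ 1) :
    wt (wordExp w) = (w.length : WithBot ℕ) := by
  obtain ⟨a, t, ht⟩ := List.exists_cons_of_ne_nil fun h ↦ hw (FreeMonoid.toList.injective h)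
  have hlen : w.length = (a :: t).length := congrArg List.length ht
  rw [wordExp, ht, wt_wordExpAux_cons, zero_add, hlen]

lemma wt_wordExp_le (w : FreeMonoid Y) : wt (wordExp w) ≤ (w.length : WithBot ℕ) := by
  rcases eq_or_ne w 1 with rfl | hw
  · exact bot_le
  · exact (wt_wordExp_of_ne_one hw).le

lemma wt_wordExp_lt_of_length_lt {m n : FreeMonoid Y} (h : m.length < n.length) :
    wt (wordExp m) < wt (wordExp n) := by
  have hn : n ≠ 1 := by rintro rfl; simp at h
  calc wt (wordExp m) ≤ (m.length : WithBot ℕ) := wt_wordExp_le m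
    _ < n.length := WithBot.coe_lt_coe.mpr h
    _ = wt (wordExp n) := (wt_wordExp_of_ne_one hn).symm

end Letterplace

section InducedWordOrd

variable {Y : Type*} {r : ((Y × ℕ+) →₀ ℕ) → ((Y × ℕ+) →₀ ℕ) → Prop}

lemma isGradedWordOrd_inducedWordOrd (hrW : IsWeighted r) :
    IsGradedWordOrd (inducedWordOrd r) :=
  fun _ _ h ↦ hrW _ _ (wt_wordExp_lt_of_length_lt h)

lemma length_le_of_inducedWordOrd (hr : IsMonOrd r) (hrW : IsWeighted r) {m n : FreeMonoid Y}
    (h : inducedWordOrd r m n) : m.length ≤ n.length :=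
  not_lt.mp fun hlt ↦ hr.irrefl _ (hr.trans _ _ _ h (isGradedWordOrd_inducedWordOrd hrW _ _ hlt))

lemma inducedWordOrd_mul_mul_of_length_eq (hr : IsMonOrd r) (hrN : IsNCompat r)
    {m n : FreeMonoid Y} (h : inducedWordOrd r m n) (hl : m.length = n.length)
    (u v : FreeMonoid Y) : inducedWordOrd r (u * m * v) (u * n * v) := by
  unfold inducedWordOrd at h ⊢
  rw [wordExp_mul, wordExp_mul, wordExp_mul, wordExp_mul, FreeMonoid.length_mul,
    FreeMonoid.length_mul, hl, add_comm _ (shiftMon _ (wordExp v)),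
    add_comm _ (shiftMon _ (wordExp v))]
  exact hr.add_compat _ _ _ (hr.add_compat _ _ _ (hrN _ _ _ h))

lemma isWordOrd_inducedWordOrd (hr : IsMonOrd r) (hrN : IsNCompat r) (hrW : IsWeighted r) :
    IsWordOrd (inducedWordOrd r) where
  total m n := by
    rcases hr.total (wordExp m) (wordExp n) with h | h | h
    · exact Or.inl h
    · exact Or.inr (Or.inl (wordExp_injective h))
    · exact Or.inr (Or.inr h)
  irrefl m := hr.irrefl (wordExp m)
  trans a b c := hr.trans (wordExp a) (wordExp b) (wordExp c)
  wf := InvImage.wf wordExp hr.wf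
  mul_compat m n u v h := by
    rcases (length_le_of_inducedWordOrd hr hrW h).lt_or_eq with hl | hl
    · apply isGradedWordOrd_inducedWordOrd hrW
      simp only [FreeMonoid.length_mul]
      omega
    · exact inducedWordOrd_mul_mul_of_length_eq hr hrN h hl u v

end InducedWordOrd

theorem statement_11_general (Y : Type*)
    (r : ((Y × ℕ+) →₀ ℕ) → ((Y × ℕ+) →₀ ℕ) → Prop)
    (hr : IsMonOrd r) (hrN : IsNCompat r) (hrW : IsWeighted r)
    (r' : FreeMonoid Y → FreeMonoid Y → Prop)
    (hr' : ∀ m n, r' m n ↔ inducedWordOrd r m n) :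
    IsWordOrd r' ∧ IsGradedWordOrd r' := by
  obtain rfl : r' = inducedWordOrd r := funext₂ fun m n ↦ propext (hr' m n)
  exact ⟨isWordOrd_inducedWordOrd hr hrN hrW, isGradedWordOrd_inducedWordOrd hrW⟩

/-- If `≺` is a weighted monomial ℕ-ordering of `P` and `≺'` is the total
order on words defined by `m ≺' n ↔ ι(m) ≺ ι(n)`, then `≺'` is a graded monomial ordering
of the free associative algebra `F`. -/
theorem statement_11 (K : Type*) [Field K] (Y : Type*) [Countable Y]
    (r : ((Y × ℕ+) →₀ ℕ) → ((Y × ℕ+) →₀ ℕ) → Prop)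
    (hr : IsMonOrd r) (hrN : IsNCompat r) (hrW : IsWeighted r)
    (r' : FreeMonoid Y → FreeMonoid Y → Prop)
    (hr' : ∀ m n, r' m n ↔ inducedWordOrd r m n) :
    IsWordOrd r' ∧ IsGradedWordOrd r' :=
  statement_11_general Y r hr hrN hrW r' hr'
end

section
/- Let ≺ be a monomial ordering of P(1) with x_i(1) ≺ x_j(1) if and only if i < j, extend it to the place ℕ-ordering of P, and let ≺' be the induced graded monomial ordering of F (m ≺' n iff ι(m) ≺ ι(n)). Then ≺' is the graded right lexicographic order: for words m = x_{i_1}⋯x_{i_k} and n = x_{j_1}⋯x_{j_l}, m ≺' n if and only if k < l, or k = l and there exists 1 ≤ t ≤ k with i_s = j_s for all t < s ≤ k and i_t < j_t. -/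
/-! The place-`j` factor of `ι(w)` is `x_i(j)` when the `j`-th letter of `w` is `x_i`, and `1`
when `w` has fewer than `j` letters. Since `1 ≺ x_i(1) ≺ x_j(1)` for `i < j`, comparing two
such factors is comparing the letters in `WithBot ℕ`, with `⊥` standing for "no letter". The
place ordering therefore compares words letter by letter from the right, after padding the
shorter one on the right with `⊥`; a longer word then wins at its last place, and words of
equal length are compared right-lexicographically. -/

section LetterplaceWords

variable {Y : Type*}

lemma wordExpAux_apply [DecidableEq Y] (n : ℕ) (l : List Y) (y : Y) (j : ℕ+) :
    wordExpAux n l (y, j) = if n < j ∧ l[(j : ℕ) - n - 1]? = some y then 1 else 0 := by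
  induction l generalizing n with
  | nil => simp [wordExpAux]
  | cons a l ih =>
    show (Finsupp.single (a, n.succPNat) 1 + wordExpAux (n + 1) l : Y × ℕ+ →₀ ℕ) (y, j) = _
    have hplace : (a, n.succPNat) = (y, j) ↔ a = y ∧ (j : ℕ) = n + 1 := by
      rw [Prod.mk.injEq, ← PNat.coe_inj, Nat.succPNat_coe, eq_comm (a := n + 1)]
    simp only [Finsupp.add_apply, ih, Finsupp.single_apply, hplace]
    rcases lt_trichotomy (j : ℕ) (n + 1) with hj | hj | hj
    · rw [if_neg (by omega), if_neg (by omega), if_neg (by omega)]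
    · simp [hj, eq_comm]
    · have hidx : (j : ℕ) - n - 1 = ((j : ℕ) - (n + 1) - 1) + 1 := by omega
      simp [hj.ne', hj, hidx, show n < (j : ℕ) by omega]

/-- The letter of `w` at position `k` (counted from `0`), or `⊥` past the end of `w`. -/
def letterAt (w : FreeMonoid Y) (k : ℕ) : WithBot Y := w.toList[k]?

lemma letterAt_eq_bot_iff {w : FreeMonoid Y} {k : ℕ} : letterAt w k = ⊥ ↔ w.length ≤ k :=
  List.getElem?_eq_none_iff

lemma letterAt_of_lt {w : FreeMonoid Y} {k : ℕ} (hk : k < w.length) (d : Y) :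
    letterAt w k = (w.toList.getD k d : Y) := by
  rw [List.getD_eq_getElem?_getD, letterAt, List.getElem?_eq_getElem hk]
  rfl

noncomputable def letterMon : WithBot Y → Y →₀ ℕ
  | ⊥ => 0
  | (y : Y) => Finsupp.single y 1

lemma letterMon_injective : Function.Injective (letterMon (Y := Y)) := by
  rintro (_ | a) (_ | b) h
  · rfl
  · exact absurd h.symm (Finsupp.single_ne_zero.mpr one_ne_zero)
  · exact absurd h (Finsupp.single_ne_zero.mpr one_ne_zero)
  · exact congrArg _ (Finsupp.single_left_injective one_ne_zero h)

lemma fiber_wordExp (w : FreeMonoid Y) (j : ℕ+) :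
    fiber (wordExp w) j = letterMon (letterAt w j.natPred) := by
  classical
  ext y
  change wordExpAux 0 w.toList (y, j) = _
  rw [wordExpAux_apply]
  simp only [letterAt, PNat.natPred, Nat.sub_zero, j.pos, true_and]
  cases w.toList[(j : ℕ) - 1]? with
  | none => simp [letterMon]
  | some a => simp [letterMon, Finsupp.single_apply]

def RightLexLetters [LT Y] (m n : FreeMonoid Y) : Prop :=
  ∃ k, letterAt m k < letterAt n k ∧ ∀ k', k < k' → letterAt m k' = letterAt n k'

lemma rightLexLetters_iff_grRightLex [LT Y] (d : Y) (m n : FreeMonoid Y) :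
    RightLexLetters m n ↔ grRightLex (· < ·) d m n := by
  constructor
  · rintro ⟨k, hlt, heq⟩
    have hkn : k < n.length := by
      by_contra! h
      rw [letterAt_eq_bot_iff.mpr h] at hlt
      exact WithBot.not_lt_bot _ hlt
    rcases lt_trichotomy m.length n.length with hmn | hmn | hmn
    · exact Or.inl hmn
    · refine Or.inr ⟨hmn, k, hmn ▸ hkn, ?_, fun s hs => ?_⟩
      · rwa [letterAt_of_lt (hmn ▸ hkn) d, letterAt_of_lt hkn d, WithBot.coe_lt_coe] at hlt
      · by_cases hs' : s < n.length
        · simpa [letterAt_of_lt (hmn ▸ hs') d, letterAt_of_lt hs' d] using heq s hs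
        · rw [List.getD_eq_default _ _ (show m.length ≤ s by omega),
            List.getD_eq_default _ _ (show n.length ≤ s by omega)]
    · have h := heq (m.length - 1) (by omega)
      rw [letterAt_of_lt (by omega) d, letterAt_eq_bot_iff.mpr (by omega)] at h
      exact absurd h WithBot.coe_ne_bot
  · rintro (hmn | ⟨hmn, t, ht, hlt, heq⟩)
    · refine ⟨n.length - 1, ?_, fun k hk => ?_⟩
      · rw [letterAt_eq_bot_iff.mpr (by omega), letterAt_of_lt (by omega) d]
        exact WithBot.bot_lt_coe _
      · rw [letterAt_eq_bot_iff.mpr (by omega), letterAt_eq_bot_iff.mpr (by omega)]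
    · refine ⟨t, ?_, fun k hk => ?_⟩
      · rwa [letterAt_of_lt ht d, letterAt_of_lt (hmn ▸ ht) d, WithBot.coe_lt_coe]
      · by_cases hk' : k < m.length
        · rw [letterAt_of_lt hk' d, letterAt_of_lt (hmn ▸ hk') d, heq k hk]
        · rw [letterAt_eq_bot_iff.mpr (by omega), letterAt_eq_bot_iff.mpr (by omega)]

variable [LinearOrder Y] {r1 : (Y →₀ ℕ) → (Y →₀ ℕ) → Prop}

lemma IsMonOrd.letterMon_lt_iff (hr1 : IsMonOrd r1)
    (hvar : ∀ i j : Y, r1 (Finsupp.single i 1) (Finsupp.single j 1) ↔ i < j)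
    (a b : WithBot Y) : r1 (letterMon a) (letterMon b) ↔ a < b := by
  rcases a with _ | a <;> rcases b with _ | b
  · exact iff_of_false (hr1.irrefl 0) (lt_irrefl _)
  · refine iff_of_true ?_ (WithBot.bot_lt_coe b)
    rcases hr1.total 0 (Finsupp.single b 1) with h | h | h
    · exact h
    · exact absurd h.symm (Finsupp.single_ne_zero.mpr one_ne_zero)
    · exact absurd h (hr1.zero_min _)
  · exact iff_of_false (hr1.zero_min _) (WithBot.not_lt_bot _)
  · exact (hvar a b).trans WithBot.coe_lt_coe.symm

lemma IsMonOrd.placeExt_wordExp_iff (hr1 : IsMonOrd r1)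
    (hvar : ∀ i j : Y, r1 (Finsupp.single i 1) (Finsupp.single j 1) ↔ i < j)
    (m n : FreeMonoid Y) : placeExt r1 (wordExp m) (wordExp n) ↔ RightLexLetters m n := by
  simp only [placeExt, fiber_wordExp, hr1.letterMon_lt_iff hvar, letterMon_injective.eq_iff]
  constructor
  · rintro ⟨j, hlt, heq⟩
    refine ⟨j.natPred, hlt, fun k hk => ?_⟩
    simpa using heq k.succPNat (by rwa [← PNat.natPred_lt_natPred, Nat.natPred_succPNat])
  · rintro ⟨k, hlt, heq⟩
    refine ⟨k.succPNat, by simpa using hlt, fun j hj => heq _ ?_⟩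
    rwa [← PNat.natPred_lt_natPred, Nat.natPred_succPNat] at hj

end LetterplaceWords

/-- Let `≺` be a monomial ordering of `P(1)` with `x_i(1) ≺ x_j(1) ↔ i < j`,
extended to the place ℕ-ordering of `P`, and let `≺'` be the induced word ordering of `F`
(`m ≺' n ↔ ι(m) ≺ ι(n)`). Then `≺'` is the graded right lexicographic order. -/
theorem statement_12
    (r1 : (ℕ →₀ ℕ) → (ℕ →₀ ℕ) → Prop) (hr1 : IsMonOrd r1)
    (hvar : ∀ i j : ℕ, r1 (Finsupp.single i 1) (Finsupp.single j 1) ↔ i < j) :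
    ∀ m n : FreeMonoid ℕ,
      inducedWordOrd (placeExt r1) m n ↔ grRightLex (· < ·) 0 m n := by
  intro m n
  rw [inducedWordOrd, hr1.placeExt_wordExp_iff hvar, rightLexLetters_iff_grRightLex]
end

section
/- Let N = ⟨x_i(1)x_j(1) : i, j ≥ 1⟩_ℕ ⊆ P, let J be a letterplace ideal of P, and let G ⊆ J ∩ L. Then G is a Gröbner L-basis of J if and only if G is a multihomogeneous Gröbner ℕ-basis of J + N modulo N, i.e. G consists of multihomogeneous elements in normal form modulo N and G ∪ {x_i(1)x_j(1) : i, j ≥ 1} is a Gröbner ℕ-basis of J + N. -/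
/-!
Only the passage from a Gröbner `L`-basis of `J` to one of `J + N` needs work. Let `m` be the
leading monomial of `f ∈ J + N`. If a place occurs twice in `m`, then `m` is divisible by a shift
of some `x_i(1) x_j(1)`. Otherwise the multidegree `μ` of `m` is square-free; as `N` is spanned by
monomials that are not square-free, the `μ`-component of `f` lies in `J`, still has leading
monomial `m`, and is a linear combination of terms `t · (k · h)` with `h ∈ J ∩ L`. Choose such a
representation whose largest leading monomial `δ` is minimal. If `δ ≠ m`, the terms with leading
monomial `δ` cancel, and the difference of two of them is `g · (k · S)` for the S-polynomial `S`
of the underlying `h, h' ∈ J ∩ L`. The lcm of their leading monomials is square-free, so either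
the intervals of places of `h` and `h'` overlap, and then `S` itself lies in `J ∩ L`, or they are
disjoint, and then `S` is a combination of terms with smaller leading monomials, as for coprime
leading monomials in the commutative case. Either way `δ` could be lowered; hence `m = δ` is
divisible by a shift of `lm(h)` for some `h ∈ J ∩ L`. Conversely, leading monomials of
multilinear elements are square-free, so no shift of `x_i(1) x_j(1)` divides them.
-/

namespace Letterplace

open MvPolynomial

abbrev Mon (Y : Type*) := (Y × ℕ+) →₀ ℕ

variable {K : Type*} [Field K] {Y : Type*}

section MonomialOrder

theorem _root_.IsMonOrd.asymm {σ : Type*} {r : (σ →₀ ℕ) → (σ →₀ ℕ) → Prop} (hr : IsMonOrd r)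
    {a b : σ →₀ ℕ} (h : r a b) : ¬ r b a :=
  fun h' => hr.irrefl a (hr.trans _ _ _ h h')

theorem _root_.IsMonOrd.exists_max {σ : Type*} {r : (σ →₀ ℕ) → (σ →₀ ℕ) → Prop} (hr : IsMonOrd r)
    {s : Multiset (σ →₀ ℕ)} (hs : s ≠ 0) : ∃ δ ∈ s, ∀ m ∈ s, r m δ ∨ m = δ := by
  induction s using Multiset.induction_on with
  | empty => exact absurd rfl hs
  | cons a s ih =>
    rcases eq_or_ne s 0 with rfl | hs₀
    · exact ⟨a, Multiset.mem_cons_self a 0, by simp⟩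
    obtain ⟨δ, hδ, hmax⟩ := ih hs₀
    have hδa : r a δ ∨ a = δ → ∃ δ ∈ a ::ₘ s, ∀ m ∈ a ::ₘ s, r m δ ∨ m = δ := fun h =>
      ⟨δ, Multiset.mem_cons_of_mem hδ, fun m hm => (Multiset.mem_cons.mp hm).elim
        (fun e => e ▸ h) (hmax m)⟩
    rcases hr.total a δ with h | h | h
    · exact hδa (Or.inl h)
    · exact hδa (Or.inr h)
    · refine ⟨a, Multiset.mem_cons_self a s, fun m hm => ?_⟩
      rcases Multiset.mem_cons.mp hm with rfl | hm
      · exact Or.inr rfl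
      rcases hmax m hm with h' | rfl
      exacts [Or.inl (hr.trans _ _ _ h' h), Or.inl h]

variable {r : Mon Y → Mon Y → Prop} {f : PL K Y} {m mf : Mon Y}

theorem _root_.IsLM.ne_zero (h : IsLM K r f mf) : f ≠ 0 := by
  rintro rfl
  simp [IsLM] at h

theorem _root_.IsLM.le_of_mem (h : IsLM K r f mf) (hm : m ∈ f.support) : r m mf ∨ m = mf := by
  by_cases e : m = mf
  exacts [Or.inr e, Or.inl (h.2 m hm e)]

theorem _root_.IsLM.unique (hr : IsMonOrd r) {m' : Mon Y} (h : IsLM K r f m) (h' : IsLM K r f m') :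
    m = m' := by
  by_contra hne
  exact hr.asymm (h.2 m' h'.1 (Ne.symm hne)) (h'.2 m h.1 hne)

theorem _root_.IsLM.coeff_eq_zero (hr : IsMonOrd r) (h : IsLM K r f mf) (hm : r mf m) :
    coeff m f = 0 := by
  by_contra hc
  rcases h.le_of_mem (mem_support_iff.mpr hc) with h' | rfl
  exacts [hr.asymm h' hm, hr.irrefl _ hm]

theorem exists_isLM (hr : IsMonOrd r) (hf : f ≠ 0) : ∃ m, IsLM K r f m := by
  obtain ⟨m, hm, hmax⟩ := hr.exists_max (s := f.support.val) (by simpa using hf)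
  exact ⟨m, hm, fun m' hm' hne => (hmax m' hm').resolve_right hne⟩

theorem isLM_monomial {c : K} (hc : c ≠ 0) : IsLM K r (monomial m c) m := by
  classical
  refine ⟨by rwa [mem_support_iff, coeff_monomial, if_pos rfl], fun m' hm' hne => absurd ?_ hne⟩
  rwa [support_monomial, if_neg hc, Finset.mem_singleton] at hm'

theorem mem_support_monomial_mul {t : Mon Y} {c : K} (hm : m ∈ (monomial t c * f).support) :
    ∃ m₀ ∈ f.support, m = t + m₀ := by
  have hc := mem_support_iff.mp hm
  rw [coeff_monomial_mul'] at hc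
  split_ifs at hc with ht
  · exact ⟨m - t, mem_support_iff.mpr (right_ne_zero_of_mul hc), (add_tsub_cancel_of_le ht).symm⟩
  · exact absurd rfl hc

theorem isLM_monomial_mul (hr : IsMonOrd r) {t : Mon Y} {c : K} (hc : c ≠ 0)
    (h : IsLM K r f mf) : IsLM K r (monomial t c * f) (t + mf) := by
  refine ⟨?_, fun m hm hne => ?_⟩
  · rw [mem_support_iff, coeff_monomial_mul]
    exact mul_ne_zero hc (mem_support_iff.mp h.1)
  · obtain ⟨m₀, hm₀, rfl⟩ := mem_support_monomial_mul hm
    exact hr.add_compat _ _ t (h.2 m₀ hm₀ fun e => hne (e ▸ rfl))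

end MonomialOrder


section Shift

theorem shiftVar_injective (k : ℕ) : Function.Injective (shiftVar (Y := Y) k) := by
  intro a b h
  have h2 : (a.2 : ℕ) + k = b.2 + k := congrArg (fun p : Y × ℕ+ => (p.2 : ℕ)) h
  have h1 := congrArg Prod.fst h
  exact Prod.ext h1 (PNat.coe_injective (by omega))

theorem shiftMon_apply (k : ℕ) (m : Mon Y) (x : Y × ℕ+) :
    shiftMon k m x = if h : k < (x.2 : ℕ) then m (x.1, ⟨x.2 - k, by omega⟩) else 0 := by
  split_ifs with h
  · have hx : x = shiftVar k (x.1, ⟨x.2 - k, by omega⟩) :=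
      Prod.ext rfl (PNat.coe_injective (show (x.2 : ℕ) = x.2 - k + k by omega))
    conv_lhs => rw [hx]
    exact Finsupp.mapDomain_apply (shiftVar_injective k) m _
  · refine Finsupp.mapDomain_of_notMem_range _ _ ?_
    rintro ⟨z, rfl⟩
    exact h (Nat.lt_add_of_pos_left z.2.2)

theorem shiftVar_comp_shiftVar (k k' : ℕ) :
    shiftVar (Y := Y) k ∘ shiftVar k' = shiftVar (k' + k) :=
  funext fun p => Prod.ext rfl (PNat.coe_injective
    (show (p.2 : ℕ) + k' + k = p.2 + (k' + k) by omega))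

theorem shiftMon_shiftMon (k k' : ℕ) (m : Mon Y) :
    shiftMon k (shiftMon k' m) = shiftMon (k' + k) m := by
  rw [shiftMon, shiftMon, shiftMon, ← Finsupp.mapDomain_comp, shiftVar_comp_shiftVar]

theorem shiftMon_add (k : ℕ) (m n : Mon Y) :
    shiftMon k (m + n) = shiftMon k m + shiftMon k n :=
  Finsupp.mapDomain_add

theorem shiftMon_sup (k : ℕ) (m n : Mon Y) :
    shiftMon k (m ⊔ n) = shiftMon k m ⊔ shiftMon k n := by
  ext x
  simp only [shiftMon_apply, Finsupp.sup_apply]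
  split_ifs <;> simp

theorem shiftMon_le_shiftMon {k : ℕ} {m n : Mon Y} (h : m ≤ n) : shiftMon k m ≤ shiftMon k n := by
  refine Finsupp.le_def.mpr fun x => ?_
  simp only [shiftMon_apply]
  split_ifs
  exacts [Finsupp.le_def.mp h _, le_rfl]

theorem shift_monomial (k : ℕ) (m : Mon Y) (c : K) :
    shift K k (monomial m c) = monomial (shiftMon k m) c :=
  rename_monomial _ _ _

theorem coeff_shift (k : ℕ) (f : PL K Y) (m : Mon Y) :
    coeff (shiftMon k m) (shift K k f) = coeff m f :=
  coeff_rename_mapDomain _ (shiftVar_injective k) f m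

theorem mem_support_shift {k : ℕ} {f : PL K Y} {m : Mon Y} (hm : m ∈ (shift K k f).support) :
    ∃ m₀ ∈ f.support, m = shiftMon k m₀ := by
  classical
  rw [shift, support_rename_of_injective (shiftVar_injective k)] at hm
  obtain ⟨m₀, hm₀, rfl⟩ := Finset.mem_image.mp hm
  exact ⟨m₀, hm₀, rfl⟩

theorem shift_shift (k k' : ℕ) (f : PL K Y) :
    shift K k (shift K k' f) = shift K (k' + k) f := by
  simp only [shift, rename_rename, shiftVar_comp_shiftVar]

theorem shift_zero (f : PL K Y) : shift K 0 f = f := by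
  have : shiftVar (Y := Y) 0 = id :=
    funext fun p => Prod.ext rfl (PNat.coe_injective (show (p.2 : ℕ) + 0 = p.2 by omega))
  simp [shift, this]

theorem isLM_shift {r : Mon Y → Mon Y → Prop} (hrN : IsNCompat r) (k : ℕ) {f : PL K Y}
    {m : Mon Y} (h : IsLM K r f m) : IsLM K r (shift K k f) (shiftMon k m) := by
  refine ⟨?_, fun m' hm' hne => ?_⟩
  · rw [mem_support_iff, coeff_shift]
    exact mem_support_iff.mp h.1
  · obtain ⟨m₀, hm₀, rfl⟩ := mem_support_shift hm'
    exact hrN k _ _ (h.2 m₀ hm₀ fun e => hne (e ▸ rfl))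

theorem isLM_monomial_mul_shift {r : Mon Y → Mon Y → Prop} (hr : IsMonOrd r) (hrN : IsNCompat r)
    {h : PL K Y} {A : Mon Y} (hA : IsLM K r h A) (t : Mon Y) (k : ℕ) :
    IsLM K r (monomial t 1 * shift K k h) (t + shiftMon k A) :=
  isLM_monomial_mul hr one_ne_zero (isLM_shift hrN k hA)

theorem coeff_monomial_mul_shift (t A : Mon Y) (k : ℕ) (h : PL K Y) :
    coeff (t + shiftMon k A) (monomial t 1 * shift K k h) = coeff A h := by
  rw [coeff_monomial_mul, coeff_shift, one_mul]

theorem exists_isLM_eq_add_shiftMon {r : Mon Y → Mon Y → Prop} (hr : IsMonOrd r)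
    (hrN : IsNCompat r) {h : PL K Y} {t δ : Mon Y} {k : ℕ}
    (hδ : IsLM K r (monomial t 1 * shift K k h) δ) : ∃ A, IsLM K r h A ∧ δ = t + shiftMon k A := by
  obtain ⟨A, hA⟩ := exists_isLM hr (f := h) fun e => hδ.ne_zero (by rw [e, map_zero, mul_zero])
  exact ⟨A, hA, hδ.unique hr (isLM_monomial_mul_shift hr hrN hA t k)⟩

end Shift

section Places

def pshift (k : ℕ) (j : ℕ+) : ℕ+ := ⟨(j : ℕ) + k, Nat.add_pos_left j.2 k⟩

noncomputable def pdShift (k : ℕ) (ν : ℕ+ →₀ ℕ) : ℕ+ →₀ ℕ := Finsupp.mapDomain (pshift k) ν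

theorem pshift_injective (k : ℕ) : Function.Injective (pshift k) := fun a b h =>
  PNat.coe_injective (by have : (a : ℕ) + k = b + k := congrArg PNat.val h; omega)

theorem pdShift_apply_pshift (k : ℕ) (ν : ℕ+ →₀ ℕ) (j : ℕ+) : pdShift k ν (pshift k j) = ν j :=
  Finsupp.mapDomain_apply (pshift_injective k) ν j

theorem single_le_of_mem_support {m : Mon Y} {x : Y × ℕ+} (hx : x ∈ m.support) :
    Finsupp.single x 1 ≤ m :=
  Finsupp.single_le_iff.mpr (Nat.one_le_iff_ne_zero.mpr (Finsupp.mem_support_iff.mp hx))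

theorem placeDeg_add (m n : Mon Y) : placeDeg (m + n) = placeDeg m + placeDeg n :=
  Finsupp.mapDomain_add

theorem placeDeg_single (x : Y × ℕ+) (n : ℕ) :
    placeDeg (Finsupp.single x n) = Finsupp.single x.2 n :=
  Finsupp.mapDomain_single

theorem placeDeg_mono {m n : Mon Y} (h : m ≤ n) : placeDeg m ≤ placeDeg n := by
  obtain ⟨c, rfl⟩ := le_iff_exists_add.mp h
  rw [placeDeg_add]
  exact le_self_add

theorem placeDeg_shiftMon (k : ℕ) (m : Mon Y) :
    placeDeg (shiftMon k m) = pdShift k (placeDeg m) := by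
  simp only [placeDeg, shiftMon, pdShift, ← Finsupp.mapDomain_comp]
  rfl

theorem apply_le_placeDeg (m : Mon Y) (x : Y × ℕ+) : m x ≤ placeDeg m x.2 := by
  have h := placeDeg_mono (Finsupp.single_le_iff.mpr le_rfl : Finsupp.single x (m x) ≤ m)
  simpa [placeDeg_single] using Finsupp.le_def.mp h x.2

theorem exists_mem_support_of_placeDeg_ne_zero {m : Mon Y} {j : ℕ+} (h : placeDeg m j ≠ 0) :
    ∃ y, (y, j) ∈ m.support := by
  classical
  obtain ⟨x, hx, rfl⟩ :=
    Finset.mem_image.mp (Finsupp.mapDomain_support (Finsupp.mem_support_iff.mpr h))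
  exact ⟨x.1, hx⟩

/-- The multidegree of the places `n + 1, …, n + D`. -/
noncomputable def intervalDeg (n D : ℕ) : ℕ+ →₀ ℕ :=
  ∑ i ∈ Finset.range D, Finsupp.single (n + i).succPNat 1

theorem intervalDeg_apply (n D : ℕ) (j : ℕ+) :
    intervalDeg n D j = if n < (j : ℕ) ∧ (j : ℕ) ≤ n + D then 1 else 0 := by
  induction D with
  | zero => simp [intervalDeg]
  | succ D ih =>
    rw [intervalDeg, Finset.sum_range_succ, Finsupp.add_apply, ← intervalDeg, ih,
      Finsupp.single_apply]
    have : (n + D).succPNat = j ↔ (j : ℕ) = n + D + 1 := by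
      rw [← PNat.coe_inj, Nat.succPNat_coe]
      omega
    split_ifs <;> simp only [this] at * <;> omega

theorem intervalDeg_le_one (n D : ℕ) (j : ℕ+) : intervalDeg n D j ≤ 1 := by
  rw [intervalDeg_apply]
  split_ifs <;> omega

theorem intervalDeg_succ (n D : ℕ) :
    intervalDeg n (D + 1) = Finsupp.single n.succPNat 1 + intervalDeg (n + 1) D := by
  ext j
  rw [Finsupp.add_apply, intervalDeg_apply, intervalDeg_apply, Finsupp.single_apply]
  split_ifs <;> simp only [← PNat.coe_inj, Nat.succPNat_coe] at * <;> omega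

theorem pdShift_intervalDeg (k n D : ℕ) : pdShift k (intervalDeg n D) = intervalDeg (n + k) D := by
  simp only [intervalDeg, pdShift, Finsupp.mapDomain_finsetSum, Finsupp.mapDomain_single]
  refine Finset.sum_congr rfl fun i _ => congrArg (Finsupp.single · 1) ?_
  exact PNat.coe_injective (by simp [pshift]; omega)

end Places


section Homogeneity

/-- Multihomogeneity is weighted homogeneity for this weight. -/
noncomputable def placeWeight : Y × ℕ+ → ℕ+ →₀ ℕ := fun x => Finsupp.single x.2 1

theorem weight_placeWeight (m : Mon Y) : Finsupp.weight placeWeight m = placeDeg m := by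
  simp [Finsupp.weight_apply, placeDeg, Finsupp.mapDomain, placeWeight]

theorem isMultiHomog_iff {μ : ℕ+ →₀ ℕ} {f : PL K Y} :
    IsMultiHomog K μ f ↔ IsWeightedHomogeneous placeWeight f μ := by
  simp only [IsMultiHomog, IsWeightedHomogeneous, mem_support_iff, weight_placeWeight]

theorem placeDeg_eq_of_mem_support {μ : ℕ+ →₀ ℕ} {f : PL K Y}
    (hf : IsWeightedHomogeneous placeWeight f μ) {m : Mon Y} (hm : m ∈ f.support) :
    placeDeg m = μ :=
  isMultiHomog_iff.mpr hf m hm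

theorem isWeightedHomogeneous_shift {μ : ℕ+ →₀ ℕ} {f : PL K Y}
    (hf : IsWeightedHomogeneous placeWeight f μ) (k : ℕ) :
    IsWeightedHomogeneous placeWeight (shift K k f) (pdShift k μ) := by
  intro m hm
  obtain ⟨m₀, hm₀, rfl⟩ := mem_support_shift (mem_support_iff.mpr hm)
  rw [weight_placeWeight, placeDeg_shiftMon, placeDeg_eq_of_mem_support hf hm₀]

theorem isWeightedHomogeneous_monomial_mul {ν : ℕ+ →₀ ℕ} {p : PL K Y}
    (hp : IsWeightedHomogeneous placeWeight p ν) (t : Mon Y) (c : K) :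
    IsWeightedHomogeneous placeWeight (monomial t c * p) (placeDeg t + ν) :=
  (isWeightedHomogeneous_monomial _ _ _ (weight_placeWeight t)).mul hp

theorem isWeightedHomogeneous_monomial_mul_shift {ν : ℕ+ →₀ ℕ} {h : PL K Y}
    (hh : IsWeightedHomogeneous placeWeight h ν) (t : Mon Y) (c : K) (k : ℕ) :
    IsWeightedHomogeneous placeWeight (monomial t c * shift K k h) (placeDeg t + pdShift k ν) :=
  isWeightedHomogeneous_monomial_mul (isWeightedHomogeneous_shift hh k) t c

theorem isWeightedHomogeneous_placeDeg_of_isLM {r : Mon Y → Mon Y → Prop} {p : PL K Y}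
    {ν : ℕ+ →₀ ℕ} (hp : IsWeightedHomogeneous placeWeight p ν) {A : Mon Y} (hA : IsLM K r p A) :
    IsWeightedHomogeneous placeWeight p (placeDeg A) :=
  placeDeg_eq_of_mem_support hp hA.1 ▸ hp

end Homogeneity

section Multilinear

theorem placeDeg_wordExpAux (n : ℕ) (l : List Y) :
    placeDeg (wordExpAux n l) = intervalDeg n l.length := by
  induction l generalizing n with
  | nil => simp [wordExpAux, intervalDeg, placeDeg]
  | cons y l ih =>
    rw [wordExpAux, placeDeg_add, placeDeg_single, ih, List.length_cons, intervalDeg_succ]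
    rfl

theorem exists_wordExpAux_eq {n D : ℕ} {m : Mon Y} (h : placeDeg m = intervalDeg n D) :
    ∃ l : List Y, m = wordExpAux n l := by
  induction D generalizing n m with
  | zero =>
    refine ⟨[], Finsupp.ext fun x => ?_⟩
    simpa [h, intervalDeg, wordExpAux] using apply_le_placeDeg m x
  | succ D ih =>
    obtain ⟨y, hy⟩ := exists_mem_support_of_placeDeg_ne_zero (m := m) (j := n.succPNat)
      (by simp [h, intervalDeg_apply])
    obtain ⟨m', rfl⟩ := le_iff_exists_add.mp (single_le_of_mem_support hy)
    rw [placeDeg_add, placeDeg_single, intervalDeg_succ] at h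
    obtain ⟨l, rfl⟩ := ih (add_left_cancel h)
    exact ⟨y :: l, rfl⟩

theorem iota_add (F G : FA K Y) : iota K (F + G) = iota K F + iota K G := by
  rw [iota, iota, iota, MonoidAlgebra.coeff_add]
  exact Finsupp.sum_add_index' (fun _ => by simp) fun _ _ _ => map_add _ _ _

theorem iota_single (w : FreeMonoid Y) (c : K) :
    iota K (MonoidAlgebra.single w c) = monomial (wordExp w) c := by
  rw [iota, MonoidAlgebra.coeff_single]
  exact Finsupp.sum_single_index (by simp)

theorem mem_support_iota {F : FA K Y} {m : Mon Y} (hm : m ∈ (iota K F).support) :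
    ∃ w : FreeMonoid Y, m = wordExp w := by
  classical
  obtain ⟨w, -, hw⟩ := Finset.mem_biUnion.mp (support_sum hm)
  refine ⟨w, ?_⟩
  by_contra hne
  rw [mem_support_iff, coeff_monomial, if_neg (Ne.symm hne)] at hw
  exact hw rfl

theorem mem_Lset_iff {f : PL K Y} :
    f ∈ Lset K ↔ ∃ D, IsWeightedHomogeneous placeWeight f (intervalDeg 0 D) := by
  constructor
  · rintro ⟨⟨F, rfl⟩, μ, hμ⟩
    by_cases hF : iota K F = 0
    · exact ⟨0, hF ▸ isWeightedHomogeneous_zero _ _ _⟩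
    obtain ⟨m, hm⟩ := Finset.nonempty_of_ne_empty (mt support_eq_empty.mp hF)
    obtain ⟨w, rfl⟩ := mem_support_iota hm
    refine ⟨FreeMonoid.length w, fun d hd => ?_⟩
    rw [weight_placeWeight, hμ d (mem_support_iff.mpr hd), ← hμ _ hm, wordExp,
      placeDeg_wordExpAux]
    rfl
  · rintro ⟨D, hf⟩
    refine ⟨?_, intervalDeg 0 D, isMultiHomog_iff.mpr hf⟩
    let ι : FA K Y →+ PL K Y := AddMonoidHom.mk' (iota K) iota_add
    change f ∈ AddMonoidHom.mrange ι
    rw [f.as_sum]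
    refine AddSubmonoid.sum_mem _ fun m hm => ?_
    obtain ⟨l, rfl⟩ := exists_wordExpAux_eq (placeDeg_eq_of_mem_support hf hm)
    exact ⟨MonoidAlgebra.single (FreeMonoid.ofList l) _, iota_single _ _⟩

theorem normalModN_of_mem_Lset {f : PL K Y} (hf : f ∈ Lset K) : NormalModN K f := by
  obtain ⟨D, hD⟩ := mem_Lset_iff.mp hf
  intro m hm j
  rw [placeDeg_eq_of_mem_support hD hm]
  exact intervalDeg_le_one 0 D j

end Multilinear


section IdealN

noncomputable def pairMon (y y' : Y) (j : ℕ+) : Mon Y :=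
  Finsupp.single (y, j) 1 + Finsupp.single (y', j) 1

theorem X_mul_X_eq_monomial_pairMon (y y' : Y) :
    (X (y, 1) * X (y', 1) : PL K Y) = monomial (pairMon y y' 1) 1 := by
  rw [X, X, monomial_mul, one_mul, pairMon]

theorem placeDeg_pairMon (y y' : Y) (j : ℕ+) : placeDeg (pairMon y y' j) = Finsupp.single j 2 := by
  rw [pairMon, placeDeg_add, placeDeg_single, placeDeg_single, ← Finsupp.single_add]

theorem shiftMon_pairMon (k : ℕ) (y y' : Y) (j : ℕ+) :
    shiftMon k (pairMon y y' j) = pairMon y y' (pshift k j) := by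
  rw [pairMon, shiftMon_add, shiftMon, shiftMon, Finsupp.mapDomain_single,
    Finsupp.mapDomain_single]
  rfl

theorem pshift_pred_one (j : ℕ+) : pshift ((j : ℕ) - 1) 1 = j :=
  PNat.coe_injective (show ((1 : ℕ+) : ℕ) + ((j : ℕ) - 1) = j by
    rw [PNat.one_coe]
    have := j.pos
    omega)

theorem exists_pairMon_le {m : Mon Y} {j : ℕ+} (h : 2 ≤ placeDeg m j) :
    ∃ y y', pairMon y y' j ≤ m := by
  obtain ⟨y, hy⟩ := exists_mem_support_of_placeDeg_ne_zero (m := m) (j := j) (by omega)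
  obtain ⟨m', rfl⟩ := le_iff_exists_add.mp (single_le_of_mem_support hy)
  rw [placeDeg_add, placeDeg_single, Finsupp.add_apply, Finsupp.single_eq_same] at h
  obtain ⟨y', hy'⟩ := exists_mem_support_of_placeDeg_ne_zero (m := m') (j := j) (by omega)
  exact ⟨y, y', add_le_add le_rfl (single_le_of_mem_support hy')⟩

theorem nspan_Ngens_le :
    nspan K (Ngens K Y) ≤ Ideal.span ((fun s => monomial s (1 : K)) ''
      Set.range (fun p : Y × Y × ℕ+ => pairMon p.1 p.2.1 p.2.2)) := by
  refine Ideal.span_le.mpr ?_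
  rintro _ ⟨k, _, ⟨y, y', rfl⟩, rfl⟩
  rw [X_mul_X_eq_monomial_pairMon, shift_monomial, shiftMon_pairMon]
  exact Ideal.subset_span ⟨_, ⟨(y, y', pshift k 1), rfl⟩, rfl⟩

theorem exists_two_le_placeDeg_of_mem_nspan_Ngens {v : PL K Y}
    (hv : v ∈ nspan K (Ngens K Y)) {m : Mon Y} (hm : m ∈ v.support) : ∃ j, 2 ≤ placeDeg m j := by
  obtain ⟨_, ⟨⟨y, y', j⟩, rfl⟩, hle⟩ := mem_ideal_span_monomial_image.mp (nspan_Ngens_le hv) m hm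
  refine ⟨j, ?_⟩
  simpa [placeDeg_pairMon] using Finsupp.le_def.mp (placeDeg_mono hle) j

/-- `N` is spanned by monomials that are not square-free. -/
theorem weightedHomogeneousComponent_eq_zero_of_mem_nspan_Ngens {μ : ℕ+ →₀ ℕ}
    (hμ : ∀ j, μ j ≤ 1) {v : PL K Y} (hv : v ∈ nspan K (Ngens K Y)) :
    weightedHomogeneousComponent placeWeight μ v = 0 := by
  classical
  ext m
  rw [coeff_weightedHomogeneousComponent, weight_placeWeight, coeff_zero]
  split_ifs with hm
  · by_contra hc
    obtain ⟨j, hj⟩ := exists_two_le_placeDeg_of_mem_nspan_Ngens hv (mem_support_iff.mpr hc)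
    have := hμ j
    rw [← hm] at this
    omega
  · rfl

end IdealN

section LeadingMonomials

variable {r : Mon Y → Mon Y → Prop}

theorem isNIdeal_nspan (S : Set (PL K Y)) : IsNIdeal K (nspan K S) := by
  intro k f hf
  induction hf using Submodule.span_induction with
  | mem g hg =>
    obtain ⟨k', f, hf, rfl⟩ := hg
    exact Ideal.subset_span ⟨k' + k, f, hf, shift_shift k k' f⟩
  | zero => simp
  | add a b _ _ ha hb => simpa using add_mem ha hb
  | smul q a _ ha => simpa using Ideal.mul_mem_left _ _ ha

theorem _root_.IsNIdeal.sup {I I' : Ideal (PL K Y)} (hI : IsNIdeal K I) (hI' : IsNIdeal K I') :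
    IsNIdeal K (I ⊔ I') := by
  intro k f hf
  obtain ⟨u, hu, v, hv, rfl⟩ := Submodule.mem_sup.mp hf
  rw [map_add]
  exact add_mem (Submodule.mem_sup_left (hI k u hu)) (Submodule.mem_sup_right (hI' k v hv))

theorem monomial_mem_LMideal {S : Set (PL K Y)} {f : PL K Y} {m : Mon Y} (hf : f ∈ S)
    (h : IsLM K r f m) : monomial m (1 : K) ∈ LMideal K r S :=
  Ideal.subset_span ⟨f, hf, h.ne_zero, m, h, rfl⟩

theorem monomial_mem_shLMideal_iff {G : Set (PL K Y)} {m : Mon Y} :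
    monomial m (1 : K) ∈ shLMideal K r G ↔
      ∃ g ∈ G, ∃ mg, IsLM K r g mg ∧ ∃ k, shiftMon k mg ≤ m := by
  classical
  have hgen : {p | ∃ g ∈ G, g ≠ 0 ∧ ∃ m, IsLM K r g m ∧ ∃ k : ℕ, p = monomial (shiftMon k m) 1} =
      (fun s => monomial s (1 : K)) ''
        {s | ∃ g ∈ G, ∃ mg, IsLM K r g mg ∧ ∃ k, s = shiftMon k mg} := by
    ext p
    constructor
    · rintro ⟨g, hg, -, mg, hmg, k, rfl⟩
      exact ⟨_, ⟨g, hg, mg, hmg, k, rfl⟩, rfl⟩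
    · rintro ⟨_, ⟨g, hg, mg, hmg, k, rfl⟩, rfl⟩
      exact ⟨g, hg, hmg.ne_zero, mg, hmg, k, rfl⟩
  rw [shLMideal, hgen, mem_ideal_span_monomial_image, support_monomial, if_neg one_ne_zero]
  simp only [Finset.mem_singleton, forall_eq]
  constructor
  · rintro ⟨_, ⟨g, hg, mg, hmg, k, rfl⟩, hle⟩
    exact ⟨g, hg, mg, hmg, k, hle⟩
  · rintro ⟨g, hg, mg, hmg, k, hle⟩
    exact ⟨_, ⟨g, hg, mg, hmg, k, rfl⟩, hle⟩

theorem shLMideal_le_LMideal (hrN : IsNCompat r) {I : Ideal (PL K Y)} (hI : IsNIdeal K I)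
    {G : Set (PL K Y)} (hG : G ⊆ I) : shLMideal K r G ≤ LMideal K r I := by
  refine Ideal.span_le.mpr ?_
  rintro _ ⟨g, hg, -, mg, hmg, k, rfl⟩
  exact monomial_mem_LMideal (hI k g (hG hg)) (isLM_shift hrN k hmg)

end LeadingMonomials


section SPolynomial

variable {r : Mon Y → Mon Y → Prop}

theorem mul_mem_of_forall_monomial_mul_mem {σ : Type*} {S : Submodule K (MvPolynomial σ K)}
    {p a : MvPolynomial σ K} (h : ∀ m ∈ p.support, monomial m 1 * a ∈ S) : p * a ∈ S := by
  rw [p.as_sum, Finset.sum_mul]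
  refine Submodule.sum_mem _ fun m hm => ?_
  rw [show monomial m (coeff m p) = coeff m p • monomial m 1 by
    rw [smul_monomial, smul_eq_mul, mul_one], smul_mul_assoc]
  exact S.smul_mem _ (h m hm)

theorem mem_support_sub_leadingTerm {p : PL K Y} {A m : Mon Y}
    (hm : m ∈ (p - monomial A (coeff A p)).support) : m ∈ p.support ∧ m ≠ A := by
  classical
  rw [mem_support_iff, coeff_sub, coeff_monomial] at hm
  split_ifs at hm with hA
  · exact absurd (sub_self _) (hA ▸ hm)
  · exact ⟨mem_support_iff.mpr (by simpa using hm), Ne.symm hA⟩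

/-- `A` and `B` stand for the leading monomials of `p` and `p'`. -/
noncomputable def sPoly (A B : Mon Y) (p p' : PL K Y) : PL K Y :=
  monomial (A ⊔ B - A) (coeff B p') * p - monomial (A ⊔ B - B) (coeff A p) * p'

theorem coeff_monomial_tsub_mul {p : PL K Y} {A w : Mon Y} (hA : A ≤ w) (c : K) :
    coeff w (monomial (w - A) c * p) = c * coeff A p := by
  obtain ⟨u, rfl⟩ : ∃ u, u + A = w := ⟨w - A, tsub_add_cancel_of_le hA⟩
  rw [add_tsub_cancel_right, coeff_monomial_mul]

theorem le_of_mem_support_monomial_tsub_mul (hr : IsMonOrd r) {p : PL K Y} {A w m : Mon Y}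
    (hA : IsLM K r p A) (hAw : A ≤ w) {c : K} (hm : m ∈ (monomial (w - A) c * p).support) :
    r m w ∨ m = w := by
  obtain ⟨u, rfl⟩ : ∃ u, u + A = w := ⟨w - A, tsub_add_cancel_of_le hAw⟩
  rw [add_tsub_cancel_right] at hm
  obtain ⟨m₀, hm₀, rfl⟩ := mem_support_monomial_mul hm
  rcases hA.le_of_mem hm₀ with h | rfl
  exacts [Or.inl (hr.add_compat _ _ _ h), Or.inr rfl]

theorem lt_of_mem_support_sPoly (hr : IsMonOrd r) {p p' : PL K Y} {A B m : Mon Y}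
    (hA : IsLM K r p A) (hB : IsLM K r p' B) (hm : m ∈ (sPoly A B p p').support) :
    r m (A ⊔ B) := by
  classical
  have hle : ∀ m ∈ (sPoly A B p p').support, r m (A ⊔ B) ∨ m = A ⊔ B := by
    intro m hm
    rw [sPoly] at hm
    rcases Finset.mem_union.mp (support_sub _ _ _ hm) with hm | hm
    · exact le_of_mem_support_monomial_tsub_mul hr hA le_sup_left hm
    · exact le_of_mem_support_monomial_tsub_mul hr hB le_sup_right hm
  refine (hle m hm).resolve_right fun e => mem_support_iff.mp hm ?_
  rw [e, sPoly, coeff_sub, coeff_monomial_tsub_mul le_sup_left,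
    coeff_monomial_tsub_mul le_sup_right, mul_comm, sub_self]

theorem isWeightedHomogeneous_monomial_tsub_mul {p : PL K Y} {A w : Mon Y}
    (hp : IsWeightedHomogeneous placeWeight p (placeDeg A)) (hA : A ≤ w) (c : K) :
    IsWeightedHomogeneous placeWeight (monomial (w - A) c * p) (placeDeg w) := by
  have := isWeightedHomogeneous_monomial_mul hp (w - A) c
  rwa [← placeDeg_add, tsub_add_cancel_of_le hA] at this

theorem isWeightedHomogeneous_sPoly {p p' : PL K Y} {A B : Mon Y}
    (hp : IsWeightedHomogeneous placeWeight p (placeDeg A))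
    (hp' : IsWeightedHomogeneous placeWeight p' (placeDeg B)) :
    IsWeightedHomogeneous placeWeight (sPoly A B p p') (placeDeg (A ⊔ B)) :=
  (isWeightedHomogeneous_monomial_tsub_mul hp le_sup_left _).sub
    (isWeightedHomogeneous_monomial_tsub_mul hp' le_sup_right _)

theorem sPoly_mem {I : Ideal (PL K Y)} {p p' : PL K Y} (A B : Mon Y) (hp : p ∈ I)
    (hp' : p' ∈ I) : sPoly A B p p' ∈ I :=
  sub_mem (I.mul_mem_left _ hp) (I.mul_mem_left _ hp')

theorem sPoly_eq_of_disjoint {p p' : PL K Y} {A B : Mon Y} (hAB : ∀ x, A x = 0 ∨ B x = 0) :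
    sPoly A B p p' = (p - monomial A (coeff A p)) * p' - (p' - monomial B (coeff B p')) * p := by
  have hsup : A ⊔ B = A + B := by
    ext x
    simp only [Finsupp.sup_apply, Finsupp.add_apply]
    rcases hAB x with h | h <;> simp [h]
  rw [sPoly, hsup, add_tsub_cancel_left, add_tsub_cancel_right]
  ring

theorem shiftMon_sup_le {t t' A B : Mon Y} {k : ℕ}
    (h : t + shiftMon k A = t' + shiftMon k B) : shiftMon k (A ⊔ B) ≤ t + shiftMon k A := by
  rw [shiftMon_sup]
  exact sup_le le_add_self (h ▸ le_add_self)

theorem smul_monomial_one_mul (c : K) (s : Mon Y) (p : PL K Y) :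
    c • (monomial s 1 * p) = monomial s c * p := by
  rw [← smul_mul_assoc, smul_monomial, smul_eq_mul, mul_one]

theorem smul_sub_smul_eq_monomial_mul_shift_sPoly {p p' : PL K Y} {t t' A B : Mon Y} {k : ℕ}
    (h : t + shiftMon k A = t' + shiftMon k B) :
    coeff B p' • (monomial t 1 * shift K k p) - coeff A p • (monomial t' 1 * shift K k p') =
      monomial (t + shiftMon k A - shiftMon k (A ⊔ B)) 1 * shift K k (sPoly A B p p') := by
  have hgw := tsub_add_cancel_of_le (shiftMon_sup_le h)
  set g := t + shiftMon k A - shiftMon k (A ⊔ B)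
  have ht : t = g + shiftMon k (A ⊔ B - A) := by
    refine add_right_cancel (b := shiftMon k A) ?_
    rw [add_assoc, ← shiftMon_add, tsub_add_cancel_of_le le_sup_left, hgw]
  have ht' : t' = g + shiftMon k (A ⊔ B - B) := by
    refine add_right_cancel (b := shiftMon k B) ?_
    rw [add_assoc, ← shiftMon_add, tsub_add_cancel_of_le le_sup_right, hgw, h]
  rw [ht, ht', smul_monomial_one_mul, smul_monomial_one_mul, sPoly, map_sub, map_mul, map_mul,
    shift_monomial, shift_monomial, mul_sub, ← mul_assoc, ← mul_assoc, monomial_mul,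
    monomial_mul, one_mul, one_mul]

end SPolynomial


section TermSpan

variable {r : Mon Y → Mon Y → Prop} {J : Ideal (PL K Y)} {μ : ℕ+ →₀ ℕ}

noncomputable def lpTerms (J : Ideal (PL K Y)) : Set (PL K Y) :=
  {a | ∃ (t : Mon Y) (k : ℕ), ∃ h ∈ (J : Set (PL K Y)) ∩ Lset K, a = monomial t 1 * shift K k h}

def IsLPTerm (J : Ideal (PL K Y)) (μ : ℕ+ →₀ ℕ) (a : PL K Y) : Prop :=
  IsWeightedHomogeneous placeWeight a μ ∧ a ∈ lpTerms J

variable (r J μ) in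
noncomputable def termSpan (P : Mon Y → Prop) : Submodule K (PL K Y) :=
  Submodule.span K {a | IsLPTerm J μ a ∧ ∃ m, IsLM K r a m ∧ P m}

theorem termSpan_mono {P P' : Mon Y → Prop} (h : ∀ m, P m → P' m) :
    termSpan r J μ P ≤ termSpan r J μ P' :=
  Submodule.span_mono fun _ ⟨ha, m, hm, hP⟩ => ⟨ha, m, hm, h m hP⟩

theorem termSpan_le_mono (hr : IsMonOrd r) {δ δ' : Mon Y} (h : r δ δ' ∨ δ = δ') :
    termSpan r J μ (fun m => r m δ ∨ m = δ) ≤ termSpan r J μ (fun m => r m δ' ∨ m = δ') := by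
  refine termSpan_mono fun m hm => ?_
  rcases h with h | rfl
  · rcases hm with hm | rfl
    exacts [Or.inl (hr.trans _ _ _ hm h), Or.inl h]
  · exact hm

theorem coeff_eq_zero_of_mem_termSpan (hr : IsMonOrd r) {P : Mon Y → Prop} {d : Mon Y}
    (hd : ∀ m, P m → r m d) {f : PL K Y} (hf : f ∈ termSpan r J μ P) : coeff d f = 0 := by
  have : termSpan r J μ P ≤ LinearMap.ker (lcoeff K d) :=
    Submodule.span_le.mpr fun _ ⟨_, m, hm, hP⟩ => hm.coeff_eq_zero hr (hd m hP)
  exact this hf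

theorem le_of_mem_support_of_mem_termSpan (hr : IsMonOrd r) {δ : Mon Y} {f : PL K Y}
    (hf : f ∈ termSpan r J μ (fun m => r m δ ∨ m = δ)) {m : Mon Y} (hm : m ∈ f.support) :
    r m δ ∨ m = δ := by
  rcases hr.total m δ with h | h | h
  · exact Or.inl h
  · exact Or.inr h
  · refine absurd (coeff_eq_zero_of_mem_termSpan hr (fun m' hm' => ?_) hf) (mem_support_iff.mp hm)
    rcases hm' with h' | rfl
    exacts [hr.trans _ _ _ h' h, h]

theorem exists_mem_termSpan_le (hr : IsMonOrd r) {P : Mon Y → Prop} {f : PL K Y}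
    (hf : f ∈ termSpan r J μ P) (hf0 : f ≠ 0) :
    ∃ δ, P δ ∧ f ∈ termSpan r J μ (fun m => r m δ ∨ m = δ) := by
  suffices f = 0 ∨ ∃ δ, P δ ∧ f ∈ termSpan r J μ (fun m => r m δ ∨ m = δ) from
    this.resolve_left hf0
  clear hf0
  induction hf using Submodule.span_induction with
  | mem a ha =>
    obtain ⟨ha, m, hm, hP⟩ := ha
    exact Or.inr ⟨m, hP, Submodule.subset_span ⟨ha, m, hm, Or.inr rfl⟩⟩
  | zero => exact Or.inl rfl
  | add a b _ _ iha ihb =>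
    rcases iha with rfl | ⟨δ₁, hP₁, ha⟩
    · simpa using ihb
    rcases ihb with rfl | ⟨δ₂, hP₂, hb⟩
    · exact Or.inr ⟨δ₁, hP₁, by simpa using ha⟩
    rcases hr.total δ₁ δ₂ with h | h | h
    · exact Or.inr ⟨δ₂, hP₂, add_mem (termSpan_le_mono hr (Or.inl h) ha) hb⟩
    · exact Or.inr ⟨δ₂, hP₂, add_mem (termSpan_le_mono hr (Or.inr h) ha) hb⟩
    · exact Or.inr ⟨δ₁, hP₁, add_mem ha (termSpan_le_mono hr (Or.inl h) hb)⟩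
  | smul c a _ iha =>
    rcases iha with rfl | ⟨δ, hP, ha⟩
    · exact Or.inl (smul_zero c)
    · exact Or.inr ⟨δ, hP, Submodule.smul_mem _ c ha⟩

theorem monomial_mul_shift_mem_termSpan (hr : IsMonOrd r) (hrN : IsNCompat r) {w : Mon Y}
    {p : PL K Y} (hp : p ∈ termSpan r J μ (r · w)) (g : Mon Y) (k : ℕ) :
    monomial g 1 * shift K k p ∈
      termSpan r J (placeDeg g + pdShift k μ) (r · (g + shiftMon k w)) := by
  induction hp using Submodule.span_induction with
  | mem a ha =>
    obtain ⟨⟨hμ, t, j, h, hh, rfl⟩, m, hm, hmw⟩ := ha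
    refine Submodule.subset_span ⟨⟨isWeightedHomogeneous_monomial_mul_shift hμ g 1 k,
      g + shiftMon k t, j + k, h, hh, ?_⟩, g + shiftMon k m,
      isLM_monomial_mul_shift hr hrN hm g k, hr.add_compat _ _ g (hrN k _ _ hmw)⟩
    rw [map_mul, shift_monomial, shift_shift, ← mul_assoc, monomial_mul, one_mul]
  | zero => simp
  | add a b _ _ ha hb => simpa [mul_add] using add_mem ha hb
  | smul c a _ ha => simpa [mul_smul_comm] using Submodule.smul_mem _ c ha

theorem mem_termSpan_of_mem_Lset (hr : IsMonOrd r) {q : PL K Y}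
    (hq : q ∈ (J : Set (PL K Y)) ∩ Lset K) (hqμ : IsWeightedHomogeneous placeWeight q μ)
    {w : Mon Y} (hw : ∀ m ∈ q.support, r m w) : q ∈ termSpan r J μ (r · w) := by
  rcases eq_or_ne q 0 with rfl | hq0
  · exact zero_mem _
  obtain ⟨m, hm⟩ := exists_isLM hr hq0
  refine Submodule.subset_span ⟨⟨hqμ, 0, 0, q, hq, ?_⟩, m, hm, hw m hm.1⟩
  rw [shift_zero, monomial_zero', C_1, one_mul]

theorem tail_mul_mem_termSpan (hr : IsMonOrd r) {p a : PL K Y} {P₀ Q : Mon Y} {ν : ℕ+ →₀ ℕ}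
    (hp : IsLM K r p P₀) (hpν : IsWeightedHomogeneous placeWeight p ν)
    (ha : ∀ m, placeDeg m = ν → IsLPTerm J μ (monomial m 1 * a)) (hQ : IsLM K r a Q) :
    (p - monomial P₀ (coeff P₀ p)) * a ∈ termSpan r J μ (r · (P₀ + Q)) := by
  refine mul_mem_of_forall_monomial_mul_mem fun m hm => ?_
  obtain ⟨hmp, hne⟩ := mem_support_sub_leadingTerm hm
  refine Submodule.subset_span ⟨ha m (placeDeg_eq_of_mem_support hpν hmp), m + Q,
    isLM_monomial_mul hr one_ne_zero hQ, ?_⟩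
  rw [add_comm m, add_comm P₀]
  exact hr.add_compat _ _ Q (hp.2 m hmp hne)

end TermSpan


section Pairs

variable {r : Mon Y → Mon Y → Prop} {J : Ideal (PL K Y)}

theorem placeDeg_sup_eq_intervalDeg {A B : Mon Y} {kk d d' : ℕ}
    (hd : placeDeg A = intervalDeg 0 d) (hd' : placeDeg B = intervalDeg kk d') (hkk : kk ≤ d)
    (hsf : ∀ j, placeDeg (A ⊔ B) j ≤ 1) : placeDeg (A ⊔ B) = intervalDeg 0 (max d (kk + d')) := by
  ext j
  have h1 := Finsupp.le_def.mp (placeDeg_mono (le_sup_left : A ≤ A ⊔ B)) j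
  have h2 := Finsupp.le_def.mp (placeDeg_mono (le_sup_right : B ≤ A ⊔ B)) j
  have h3 := Finsupp.le_def.mp (placeDeg_mono (sup_le le_self_add le_add_self : A ⊔ B ≤ A + B)) j
  have h4 := hsf j
  rw [placeDeg_add, Finsupp.add_apply, hd, hd'] at h3
  rw [hd] at h1
  rw [hd'] at h2
  simp only [intervalDeg_apply] at h1 h2 h3 ⊢
  split_ifs at h1 h2 h3 ⊢ <;> omega

theorem disjoint_of_intervalDeg {A B : Mon Y} {kk d d' : ℕ}
    (hd : placeDeg A = intervalDeg 0 d) (hd' : placeDeg B = intervalDeg kk d') (hkk : d ≤ kk)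
    (x : Y × ℕ+) : A x = 0 ∨ B x = 0 := by
  have h1 := apply_le_placeDeg A x
  have h2 := apply_le_placeDeg B x
  rw [hd, intervalDeg_apply] at h1
  rw [hd', intervalDeg_apply] at h2
  split_ifs at h1 h2 <;> omega

variable {h h' : PL K Y} {A B : Mon Y} {kk : ℕ}

theorem sPoly_mem_termSpan_of_placeDeg_eq (hr : IsMonOrd r) (hJ : IsNIdeal K J)
    (hh : h ∈ (J : Set (PL K Y)) ∩ Lset K) (hh' : h' ∈ (J : Set (PL K Y)) ∩ Lset K)
    (hA : IsLM K r h A) (hB : IsLM K r (shift K kk h') B) {D : ℕ}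
    (hD : placeDeg (A ⊔ B) = intervalDeg 0 D) :
    sPoly A B h (shift K kk h') ∈ termSpan r J (placeDeg (A ⊔ B)) (r · (A ⊔ B)) := by
  obtain ⟨d, hd⟩ := mem_Lset_iff.mp hh.2
  obtain ⟨d', hd'⟩ := mem_Lset_iff.mp hh'.2
  have hs := isWeightedHomogeneous_sPoly (isWeightedHomogeneous_placeDeg_of_isLM hd hA)
    (isWeightedHomogeneous_placeDeg_of_isLM (isWeightedHomogeneous_shift hd' kk) hB)
  exact mem_termSpan_of_mem_Lset hr ⟨sPoly_mem A B hh.1 (hJ kk h' hh'.1),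
    mem_Lset_iff.mpr ⟨D, hD ▸ hs⟩⟩ hs fun m hm => lt_of_mem_support_sPoly hr hA hB hm

theorem sPoly_mem_termSpan_of_disjoint (hr : IsMonOrd r)
    (hh : h ∈ (J : Set (PL K Y)) ∩ Lset K) (hh' : h' ∈ (J : Set (PL K Y)) ∩ Lset K)
    (hA : IsLM K r h A) (hB : IsLM K r (shift K kk h') B) (hAB : ∀ x, A x = 0 ∨ B x = 0) :
    sPoly A B h (shift K kk h') ∈ termSpan r J (placeDeg (A ⊔ B)) (r · (A ⊔ B)) := by
  obtain ⟨d, hd⟩ := mem_Lset_iff.mp hh.2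
  obtain ⟨d', hd'⟩ := mem_Lset_iff.mp hh'.2
  have hdA := isWeightedHomogeneous_placeDeg_of_isLM hd hA
  have hdB := isWeightedHomogeneous_placeDeg_of_isLM (isWeightedHomogeneous_shift hd' kk) hB
  have hsup : A ⊔ B = A + B := by
    ext x
    simp only [Finsupp.sup_apply, Finsupp.add_apply]
    rcases hAB x with h | h <;> simp [h]
  have hterm₁ : ∀ m, placeDeg m = placeDeg A →
      IsLPTerm J (placeDeg (A + B)) (monomial m 1 * shift K kk h') := fun m hm =>
    ⟨by simpa [placeDeg_add, hm] using isWeightedHomogeneous_monomial_mul hdB m 1,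
      m, kk, h', hh', rfl⟩
  have hterm₂ : ∀ m, placeDeg m = placeDeg B →
      IsLPTerm J (placeDeg (A + B)) (monomial m 1 * shift K 0 h) := fun m hm =>
    ⟨by simpa [placeDeg_add, hm, add_comm, shift_zero] using
      isWeightedHomogeneous_monomial_mul hdA m 1, m, 0, h, hh, rfl⟩
  rw [sPoly_eq_of_disjoint hAB, hsup]
  refine sub_mem (tail_mul_mem_termSpan hr hA hdA hterm₁ hB) ?_
  have := tail_mul_mem_termSpan hr hB hdB hterm₂ (by rwa [shift_zero])
  rwa [shift_zero, add_comm B] at this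

theorem sPoly_mem_termSpan (hr : IsMonOrd r) (hJ : IsNIdeal K J)
    (hh : h ∈ (J : Set (PL K Y)) ∩ Lset K) (hh' : h' ∈ (J : Set (PL K Y)) ∩ Lset K)
    (hA : IsLM K r h A) (hB : IsLM K r (shift K kk h') B) (hsf : ∀ j, placeDeg (A ⊔ B) j ≤ 1) :
    sPoly A B h (shift K kk h') ∈ termSpan r J (placeDeg (A ⊔ B)) (r · (A ⊔ B)) := by
  obtain ⟨d, hd⟩ := mem_Lset_iff.mp hh.2
  obtain ⟨d', hd'⟩ := mem_Lset_iff.mp hh'.2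
  have hdA : placeDeg A = intervalDeg 0 d := placeDeg_eq_of_mem_support hd hA.1
  have hdB : placeDeg B = intervalDeg kk d' := by
    rw [placeDeg_eq_of_mem_support (isWeightedHomogeneous_shift hd' kk) hB.1, pdShift_intervalDeg,
      zero_add]
  rcases le_or_gt kk d with hkk | hkk
  · exact sPoly_mem_termSpan_of_placeDeg_eq hr hJ hh hh' hA hB
      (placeDeg_sup_eq_intervalDeg hdA hdB hkk hsf)
  · exact sPoly_mem_termSpan_of_disjoint hr hh hh' hA hB (disjoint_of_intervalDeg hdA hdB hkk.le)

end Pairs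

section Cancellation

variable {r : Mon Y → Mon Y → Prop} {J : Ideal (PL K Y)} {μ : ℕ+ →₀ ℕ}

/-- The difference is `g · (k · S(h, h'))` for the underlying `h, h' ∈ J ∩ L`, and the
square-freeness of `μ` makes this S-polynomial a combination of smaller terms. -/
theorem smul_sub_smul_mem_termSpan (hr : IsMonOrd r) (hrN : IsNCompat r) (hJ : IsNIdeal K J)
    (hμ : ∀ j, μ j ≤ 1) {a b : PL K Y} {δ : Mon Y} (ha : IsLPTerm J μ a) (hb : IsLPTerm J μ b)
    (hla : IsLM K r a δ) (hlb : IsLM K r b δ) :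
    coeff δ b • a - coeff δ a • b ∈ termSpan r J μ (r · δ) := by
  obtain ⟨haμ, t, k, h, hh, rfl⟩ := ha
  obtain ⟨hbμ, t', k', h', hh', rfl⟩ := hb
  wlog hk : k ≤ k' generalizing t k h t' k' h'
  · rw [← neg_sub]
    exact neg_mem (this t' k' h' hh' hlb hbμ t k h hh hla haμ (by omega))
  obtain ⟨kk, rfl⟩ := Nat.exists_eq_add_of_le' hk
  rw [← shift_shift] at hlb ⊢
  obtain ⟨A, hA, rfl⟩ := exists_isLM_eq_add_shiftMon hr hrN hla
  obtain ⟨B, hB, hδ⟩ := exists_isLM_eq_add_shiftMon hr hrN hlb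
  have hcb : coeff (t + shiftMon k A) (monomial t' 1 * shift K k (shift K kk h')) =
      coeff B (shift K kk h') := by
    rw [hδ, coeff_monomial_mul_shift]
  rw [hcb, coeff_monomial_mul_shift, smul_sub_smul_eq_monomial_mul_shift_sPoly hδ]
  set g := t + shiftMon k A - shiftMon k (A ⊔ B)
  have hgw : g + shiftMon k (A ⊔ B) = t + shiftMon k A :=
    tsub_add_cancel_of_le (shiftMon_sup_le hδ)
  have hμδ : placeDeg g + pdShift k (placeDeg (A ⊔ B)) = μ := by
    rw [← placeDeg_shiftMon, ← placeDeg_add, hgw]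
    exact placeDeg_eq_of_mem_support haμ hla.1
  have hsf : ∀ j, placeDeg (A ⊔ B) j ≤ 1 := fun j => by
    have := hμ (pshift k j)
    rw [← hμδ, Finsupp.add_apply, pdShift_apply_pshift] at this
    omega
  rw [← hμδ, ← hgw]
  exact monomial_mul_shift_mem_termSpan hr hrN (sPoly_mem_termSpan hr hJ hh hh' hA hB hsf) g k

theorem termSpan_le_of_forall_not_isLM {δ : Mon Y}
    (hδ : ∀ a, IsLPTerm J μ a → ¬ IsLM K r a δ) :
    termSpan r J μ (fun m => r m δ ∨ m = δ) ≤ termSpan r J μ (r · δ) :=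
  Submodule.span_le.mpr fun a ⟨ha, m, hm, hmδ⟩ =>
    Submodule.subset_span ⟨ha, m, hm, hmδ.resolve_right fun e => hδ a ha (e ▸ hm)⟩

/-- Modulo smaller terms, all terms with leading monomial `δ` are multiples of a single one. -/
theorem mem_termSpan_lt_of_coeff_eq_zero (hr : IsMonOrd r) (hrN : IsNCompat r)
    (hJ : IsNIdeal K J) (hμ : ∀ j, μ j ≤ 1) {δ : Mon Y} {f : PL K Y}
    (hf : f ∈ termSpan r J μ (fun m => r m δ ∨ m = δ)) (hδ : coeff δ f = 0) :
    f ∈ termSpan r J μ (r · δ) := by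
  by_cases hex : ∃ a₀, IsLPTerm J μ a₀ ∧ IsLM K r a₀ δ
  swap
  · push Not at hex
    exact termSpan_le_of_forall_not_isLM hex hf
  obtain ⟨a₀, ha₀, hl₀⟩ := hex
  have he₀ : coeff δ a₀ ≠ 0 := mem_support_iff.mp hl₀.1
  have hle : termSpan r J μ (fun m => r m δ ∨ m = δ) ≤ (K ∙ a₀) ⊔ termSpan r J μ (r · δ) := by
    refine Submodule.span_le.mpr ?_
    rintro a ⟨ha, m, hm, hmδ | rfl⟩
    · exact Submodule.mem_sup_right (Submodule.subset_span ⟨ha, m, hm, hmδ⟩)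
    refine Submodule.mem_sup.mpr ⟨(coeff m a₀)⁻¹ • coeff m a • a₀,
      Submodule.smul_mem _ _ (Submodule.smul_mem _ _ (Submodule.mem_span_singleton_self a₀)),
      (coeff m a₀)⁻¹ • (coeff m a₀ • a - coeff m a • a₀),
      Submodule.smul_mem _ _ (smul_sub_smul_mem_termSpan hr hrN hJ hμ ha ha₀ hm hl₀), ?_⟩
    rw [smul_sub, smul_smul, smul_smul, inv_mul_cancel₀ he₀, one_smul, add_sub_cancel]
  obtain ⟨_, hc, g, hg, rfl⟩ := Submodule.mem_sup.mp (hle hf)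
  obtain ⟨c, rfl⟩ := Submodule.mem_span_singleton.mp hc
  rw [coeff_add, coeff_smul, coeff_eq_zero_of_mem_termSpan hr (fun _ h => h) hg, add_zero,
    smul_eq_mul, mul_eq_zero] at hδ
  rw [hδ.resolve_right he₀, zero_smul, zero_add]
  exact hg

theorem exists_isLPTerm_isLM_of_mem_termSpan (hr : IsMonOrd r) (hrN : IsNCompat r)
    (hJ : IsNIdeal K J) (hμ : ∀ j, μ j ≤ 1) (δ : Mon Y) {f : PL K Y}
    (hf : f ∈ termSpan r J μ (fun m => r m δ ∨ m = δ)) {mf : Mon Y} (hmf : IsLM K r f mf) :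
    ∃ a, IsLPTerm J μ a ∧ IsLM K r a mf := by
  induction δ using hr.wf.induction generalizing f with
  | _ δ ih =>
  by_cases hδ : coeff δ f = 0
  · obtain ⟨δ', hδ', hf'⟩ := exists_mem_termSpan_le hr
      (mem_termSpan_lt_of_coeff_eq_zero hr hrN hJ hμ hf hδ) hmf.ne_zero
    exact ih δ' hδ' hf' hmf
  obtain rfl : mf = δ := (le_of_mem_support_of_mem_termSpan hr hf hmf.1).resolve_left
    fun h => hδ (hmf.coeff_eq_zero hr h)
  by_contra hno
  push Not at hno
  exact hδ (coeff_eq_zero_of_mem_termSpan hr (fun _ h => h)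
    (termSpan_le_of_forall_not_isLM hno hf))

end Cancellation


section Representation

variable {r : Mon Y → Mon Y → Prop} {J : Ideal (PL K Y)}

theorem span_isLPTerm_le_termSpan (hr : IsMonOrd r) (μ : ℕ+ →₀ ℕ) :
    Submodule.span K {a | IsLPTerm J μ a} ≤ termSpan r J μ (fun _ => True) := by
  refine Submodule.span_le.mpr fun a ha => ?_
  rcases eq_or_ne a 0 with rfl | ha0
  · exact zero_mem _
  obtain ⟨m, hm⟩ := exists_isLM hr ha0
  exact Submodule.subset_span ⟨ha, m, hm, trivial⟩

theorem mem_span_lpTerms (hJ : IsLPIdeal K J) {u : PL K Y} (hu : u ∈ J) :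
    u ∈ Submodule.span K (lpTerms J) := by
  set M := Submodule.span K (lpTerms J)
  have hmul : ∀ (q : PL K Y), ∀ v ∈ M, q * v ∈ M := by
    refine fun q v hv => mul_mem_of_forall_monomial_mul_mem fun m _ => ?_
    induction hv using Submodule.span_induction with
    | mem a ha =>
      obtain ⟨t, k, h, hh, rfl⟩ := ha
      exact Submodule.subset_span ⟨m + t, k, h, hh, by rw [← mul_assoc, monomial_mul, one_mul]⟩
    | zero => simp
    | add a b _ _ ha hb => simpa [mul_add] using add_mem ha hb
    | smul c a _ ha => simpa [mul_smul_comm] using M.smul_mem c ha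
  rw [hJ.2] at hu
  induction hu using Submodule.span_induction with
  | mem g hg =>
    obtain ⟨k, h, hh, rfl⟩ := hg
    exact Submodule.subset_span ⟨0, k, h, hh, by rw [monomial_zero', C_1, one_mul]⟩
  | zero => exact zero_mem _
  | add a b _ _ ha hb => exact add_mem ha hb
  | smul q v _ hv => exact hmul q v hv

theorem weightedHomogeneousComponent_mem_span_isLPTerm (hJ : IsLPIdeal K J) {u : PL K Y}
    (hu : u ∈ J) (μ : ℕ+ →₀ ℕ) :
    weightedHomogeneousComponent placeWeight μ u ∈ Submodule.span K {a | IsLPTerm J μ a} := by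
  have hmem := mem_span_lpTerms hJ hu
  clear hu
  induction hmem using Submodule.span_induction with
  | mem a ha =>
    obtain ⟨t, k, h, hh, rfl⟩ := ha
    obtain ⟨D, hD⟩ := mem_Lset_iff.mp hh.2
    have hν := isWeightedHomogeneous_monomial_mul_shift hD t 1 k
    by_cases hμ : μ = placeDeg t + pdShift k (intervalDeg 0 D)
    · subst hμ
      rw [hν.weightedHomogeneousComponent_same]
      exact Submodule.subset_span ⟨hν, t, k, h, hh, rfl⟩
    · rw [hν.weightedHomogeneousComponent_ne μ hμ]
      exact zero_mem _
  | zero => simp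
  | add a b _ _ ha hb => simpa using add_mem ha hb
  | smul c a _ ha => simpa using Submodule.smul_mem _ c ha

theorem isLM_weightedHomogeneousComponent {f : PL K Y} {mf : Mon Y} (h : IsLM K r f mf) :
    IsLM K r (weightedHomogeneousComponent placeWeight (placeDeg mf) f) mf := by
  classical
  refine ⟨?_, fun m hm hne => h.2 m ?_ hne⟩
  · rw [mem_support_iff, coeff_weightedHomogeneousComponent, weight_placeWeight, if_pos rfl]
    exact mem_support_iff.mp h.1
  · rw [mem_support_iff, coeff_weightedHomogeneousComponent] at hm
    rw [mem_support_iff]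
    split_ifs at hm
    exacts [hm, absurd rfl hm]

theorem exists_shiftMon_le_of_mem_sup (hr : IsMonOrd r) (hrN : IsNCompat r) (hJ : IsLPIdeal K J)
    {f : PL K Y} (hf : f ∈ J ⊔ nspan K (Ngens K Y)) {mf : Mon Y} (hmf : IsLM K r f mf)
    (hsf : ∀ j, placeDeg mf j ≤ 1) :
    ∃ h ∈ (J : Set (PL K Y)) ∩ Lset K, ∃ mh k, IsLM K r h mh ∧ shiftMon k mh ≤ mf := by
  obtain ⟨u, hu, v, hv, rfl⟩ := Submodule.mem_sup.mp hf
  have hφ : IsLM K r (weightedHomogeneousComponent placeWeight (placeDeg mf) u) mf := by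
    simpa [weightedHomogeneousComponent_eq_zero_of_mem_nspan_Ngens hsf hv] using
      isLM_weightedHomogeneousComponent hmf
  obtain ⟨δ, -, hδ⟩ := exists_mem_termSpan_le hr (span_isLPTerm_le_termSpan hr _
    (weightedHomogeneousComponent_mem_span_isLPTerm hJ hu _)) hφ.ne_zero
  obtain ⟨_, ⟨-, t, k, h, hh, rfl⟩, hla⟩ :=
    exists_isLPTerm_isLM_of_mem_termSpan hr hrN hJ.1 hsf δ hδ hφ
  obtain ⟨mh, hmh, rfl⟩ := exists_isLM_eq_add_shiftMon hr hrN hla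
  exact ⟨h, hh, mh, k, hmh, le_add_self⟩

end Representation


section GroebnerBases

variable {r : Mon Y → Mon Y → Prop} {J : Ideal (PL K Y)} {G : Set (PL K Y)}

theorem _root_.IsGroebnerLB.isGroebnerNB_sup (hr : IsMonOrd r) (hrN : IsNCompat r)
    (hJ : IsLPIdeal K J) (hLB : IsGroebnerLB K r J G) :
    IsGroebnerNB K r (J ⊔ nspan K (Ngens K Y)) (G ∪ Ngens K Y) := by
  have hsub : G ∪ Ngens K Y ⊆ (J ⊔ nspan K (Ngens K Y) : Ideal (PL K Y)) := by
    rintro g (hg | hg)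
    · exact Submodule.mem_sup_left (hLB.1 hg).1
    · exact Submodule.mem_sup_right (Ideal.subset_span ⟨0, g, hg, (shift_zero g).symm⟩)
  refine ⟨hsub, le_antisymm
    (shLMideal_le_LMideal hrN (IsNIdeal.sup hJ.1 (isNIdeal_nspan _)) hsub) (Ideal.span_le.mpr ?_)⟩
  rintro _ ⟨f, hf, -, mf, hmf, rfl⟩
  rw [SetLike.mem_coe, monomial_mem_shLMideal_iff]
  by_cases hsf : ∀ j, placeDeg mf j ≤ 1
  · obtain ⟨h, hh, mh, k, hmh, hle⟩ := exists_shiftMon_le_of_mem_sup hr hrN hJ hf hmf hsf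
    obtain ⟨g, hg, k', mg, mh', hmg, hmh', hle'⟩ := hLB.2 h hh hmh.ne_zero
    obtain rfl := hmh'.unique hr hmh
    refine ⟨g, Or.inl hg, mg, hmg, k' + k, ?_⟩
    rw [← shiftMon_shiftMon]
    exact (shiftMon_le_shiftMon hle').trans hle
  · push Not at hsf
    obtain ⟨j, hj⟩ := hsf
    obtain ⟨y, y', hle⟩ := exists_pairMon_le (show 2 ≤ placeDeg mf j by omega)
    refine ⟨_, Or.inr ⟨y, y', rfl⟩, pairMon y y' 1, ?_, (j : ℕ) - 1, ?_⟩
    · rw [X_mul_X_eq_monomial_pairMon]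
      exact isLM_monomial one_ne_zero
    · rwa [shiftMon_pairMon, pshift_pred_one]

theorem _root_.IsGroebnerNB.isGroebnerLB (hr : IsMonOrd r) (hG : G ⊆ (J : Set (PL K Y)) ∩ Lset K)
    (hNB : IsGroebnerNB K r (J ⊔ nspan K (Ngens K Y)) (G ∪ Ngens K Y)) :
    IsGroebnerLB K r J G := by
  refine ⟨hG, fun f hf hf0 => ?_⟩
  obtain ⟨mf, hmf⟩ := exists_isLM hr hf0
  have hmem := monomial_mem_LMideal (S := (J ⊔ nspan K (Ngens K Y) : Ideal (PL K Y)))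
    (Submodule.mem_sup_left hf.1) hmf
  rw [← hNB.2, monomial_mem_shLMideal_iff] at hmem
  obtain ⟨g, hg | ⟨y, y', rfl⟩, mg, hmg, k, hle⟩ := hmem
  · exact ⟨g, hg, k, mg, mf, hmg, hmf, hle⟩
  rw [X_mul_X_eq_monomial_pairMon] at hmg
  obtain rfl := hmg.unique hr (isLM_monomial one_ne_zero)
  have h2 := Finsupp.le_def.mp (placeDeg_mono hle) (pshift k 1)
  rw [shiftMon_pairMon, placeDeg_pairMon, Finsupp.single_eq_same] at h2
  have := normalModN_of_mem_Lset hf.2 mf hmf.1 (pshift k 1)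
  omega

end GroebnerBases

end Letterplace

open Letterplace

theorem statement_13_general (K : Type*) [Field K] (Y : Type*)
    (r : ((Y × ℕ+) →₀ ℕ) → ((Y × ℕ+) →₀ ℕ) → Prop)
    (hr : IsMonOrd r) (hrN : IsNCompat r)
    (J : Ideal (PL K Y)) (hJ : IsLPIdeal K J)
    (G : Set (PL K Y)) (hG : G ⊆ (J : Set (PL K Y)) ∩ Lset K) :
    IsGroebnerLB K r J G ↔
      ((∀ g ∈ G, (∃ μ, IsMultiHomog K μ g) ∧ NormalModN K g) ∧
        IsGroebnerNB K r (J ⊔ nspan K (Ngens K Y)) (G ∪ Ngens K Y)) :=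
  ⟨fun hLB => ⟨fun _ hg => ⟨(hG hg).2.2, normalModN_of_mem_Lset (hG hg).2⟩,
    hLB.isGroebnerNB_sup hr hrN hJ⟩, fun h => h.2.isGroebnerLB hr hG⟩

/-- For `N = ⟨x_i(1)x_j(1)⟩_ℕ`, a letterplace ideal `J ⊆ P` and
`G ⊆ J ∩ L`: `G` is a Gröbner `L`-basis of `J` iff `G` is a multihomogeneous Gröbner ℕ-basis
of `J + N` modulo `N`, i.e. `G` consists of multihomogeneous elements in normal form modulo `N`
and `G ∪ {x_i(1)x_j(1)}` is a Gröbner ℕ-basis of `J + N`. -/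
theorem statement_13 (K : Type*) [Field K] (Y : Type*) [Countable Y]
    (r : ((Y × ℕ+) →₀ ℕ) → ((Y × ℕ+) →₀ ℕ) → Prop)
    (hr : IsMonOrd r) (hrN : IsNCompat r) (hrW : IsWeighted r)
    (J : Ideal (PL K Y)) (hJ : IsLPIdeal K J)
    (G : Set (PL K Y)) (hG : G ⊆ (J : Set (PL K Y)) ∩ Lset K) :
    IsGroebnerLB K r J G ↔
      ((∀ g ∈ G, (∃ μ, IsMultiHomog K μ g) ∧ NormalModN K g) ∧
        IsGroebnerNB K r (J ⊔ nspan K (Ngens K Y)) (G ∪ Ngens K Y)) :=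
  statement_13_general K Y r hr hrN J hJ G hG
end
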